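/- arXiv:1403.8133 — 5 statements merged into one kernel-verified Lean document; each statement's English description precedes it below -/
import Mathlib

section
/- Let 0 < k < n and let O_{k,n} ⊂ ℝ^{[k]×[n−k]} be the convex hull of the characteristic vectors {χ_I : I ∈ V_{k,n}}. Then for every point x ∈ O_{k,n} there exist a unique set S ⊆ V_{k,n} of pairwise nonnesting tuples and unique strictly positive coefficients (α_I)_{I ∈ S} with Σ_{I ∈ S} α_I = 1 and x = Σ_{I ∈ S} α_I χ_I. (This expresses that the nonnesting complex Δ^{NN}_{k,n} is a triangulation of the order polytope O_{k,n}.) -/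
/-- Two arcs `(i < i')` and `(j < j')` cross if `i < j < i' < j'` or `j < i < j' < i'`. -/
def Cross (i i' j j' : ℕ) : Prop :=
  (i < j ∧ j < i' ∧ i' < j') ∨ (j < i ∧ i < j' ∧ j' < i')
/-- Two arcs `(i < i')` and `(j < j')` nest if `i < j < j' < i'` or `j < i < i' < j'`. -/
def Nest (i i' j j' : ℕ) : Prop :=
  (i < j ∧ j < j' ∧ j' < i') ∨ (j < i ∧ i < i' ∧ i' < j')
/-- `I : Fin k → ℕ` represents an element of `V_{k,n}`: a strictly increasing
`k`-tuple with entries in `[n] = {1, …, n}`. -/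
def IsVkn (n : ℕ) {k : ℕ} (I : Fin k → ℕ) : Prop :=
  StrictMono I ∧ ∀ a, 1 ≤ I a ∧ I a ≤ n
/-- `I, J ∈ V_{k,n}` are noncrossing if for all indices `a < b` such that
`I l = J l` for all `a < l < b`, the arcs `(I a < I b)` and `(J a < J b)` do not cross. -/
def NonCrossing {k : ℕ} (I J : Fin k → ℕ) : Prop :=
  ∀ a b : Fin k, a < b → (∀ l : Fin k, a < l → l < b → I l = J l) →
    ¬ Cross (I a) (I b) (J a) (J b)
/-- `I, J ∈ V_{k,n}` are nonnesting if for all indices `a < b`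
the arcs `(I a < I b)` and `(J a < J b)` do not nest. -/
def NonNesting {k : ℕ} (I J : Fin k → ℕ) : Prop :=
  ∀ a b : Fin k, a < b → ¬ Nest (I a) (I b) (J a) (J b)
/-- `x` is an entry of the tuple `I` (i.e. `x` belongs to `I` viewed as a subset of `[n]`). -/
def MemT {k : ℕ} (I : Fin k → ℕ) (x : ℕ) : Prop := ∃ a, I a = x
/-- The characteristic vector `χ_I` as a real vector in `ℝ^{[k]×[m]}` (`m = n−k`),
in 0-based coordinates: `χ_I(a,b) = 1` iff `i_{a+1} ≤ a+b+1`. -/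
noncomputable def chiR (m : ℕ) {k : ℕ} (I : Fin k → ℕ) : Fin k × Fin m → ℝ :=
  fun p => if I p.1 ≤ p.1.val + p.2.val + 1 then 1 else 0


/-!
Every point `x` of the hull satisfies the inequalities of the order polytope: `0 ≤ x ≤ 1`, `x`
increasing along rows and decreasing down columns. Its superlevel sets `{x ≥ t}` are then the
staircases (supports of `χ_I`) of tuples `threshold x t`, which increase with `t` and are thus
pairwise nonnesting, and the layer-cake formula `x = ∑ₜ (t - t⁻) 𝟙{x ≥ t}`, over the positive
values `t` of `x` and `1` (with `t⁻` the preceding one, or `0`), is the required decomposition.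

Conversely, in a decomposition along a nonnesting family the staircases form a chain, so each of
them is the superlevel set of `x` cut at the total weight of the staircases containing it. Hence
every member of the family is some `threshold x t`, and evaluating `x` at its points shows that
the coefficients have the same partial sums as the layer-cake weights; the latter are positive, so
the two decompositions agree.
-/

open Finset
open scoped Classical

section Levels

noncomputable def prevLevel (T : Finset ℝ) (t : ℝ) : ℝ :=
  (insert 0 (T.filter (· < t))).max' (insert_nonempty _ _)

lemma prevLevel_lt {T : Finset ℝ} {t : ℝ} (ht : 0 < t) : prevLevel T t < t := by
  simp only [prevLevel, max'_lt_iff, mem_insert, mem_filter]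
  rintro s (rfl | ⟨-, hs⟩) <;> assumption

lemma prevLevel_insert_of_le {T : Finset ℝ} {a t : ℝ} (hta : t ≤ a) :
    prevLevel (insert a T) t = prevLevel T t := by
  simp only [prevLevel, filter_insert, if_neg hta.not_gt]

lemma max'_insert_zero_eq {T : Finset ℝ} {c : ℝ} (hc : c ∈ insert 0 T) (hT : ∀ t ∈ T, t ≤ c)
    (hc0 : 0 ≤ c) : (insert 0 T).max' (insert_nonempty _ _) = c :=
  le_antisymm (max'_le _ _ _ (by simpa [hc0] using hT)) (le_max' _ _ hc)

lemma sum_filter_le_sub_prevLevel {T : Finset ℝ} (hT : ∀ t ∈ T, 0 ≤ t) (c : ℝ) :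
    ∑ s ∈ T with s ≤ c, (s - prevLevel T s) =
      (insert 0 (T.filter (· ≤ c))).max' (insert_nonempty _ _) := by
  induction T using induction_on_max with
  | empty => simp
  | insert a T hlt ih =>
    have ih := ih fun s hs => hT s (mem_insert_of_mem hs)
    have hprev : ∀ s ∈ T, prevLevel (insert a T) s = prevLevel T s := fun s hs =>
      prevLevel_insert_of_le (hlt s hs).le
    by_cases hac : a ≤ c
    · have hTc : T.filter (· ≤ c) = T := filter_true_of_mem fun s hs => (hlt s hs).le.trans hac
      have hprev_a : prevLevel T a = ∑ s ∈ T with s ≤ c, (s - prevLevel T s) := by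
        rw [ih]; simp only [hTc, prevLevel, filter_true_of_mem hlt]
      rw [filter_insert, if_pos hac, hTc, sum_insert (fun h => (hlt a h).false),
        sum_congr rfl fun s hs => by rw [hprev s hs], prevLevel_insert_of_le le_rfl, hprev_a, hTc,
        sub_add_cancel, max'_insert_zero_eq (mem_insert_of_mem (mem_insert_self a T))
          (by simpa using fun s hs => (hlt s hs).le) (hT a (mem_insert_self a T))]
    · rw [filter_insert, if_neg hac, sum_congr rfl fun s hs => by rw [hprev s (mem_filter.1 hs).1],
        ih]

lemma eq_zero_of_sum_filter_le_eq_zero {α M : Type*} [LinearOrder α] [AddCommMonoid M]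
    {T : Finset α} {d : α → M} (h : ∀ t ∈ T, ∑ s ∈ T with s ≤ t, d s = 0) :
    ∀ t ∈ T, d t = 0 := by
  classical
  by_contra! hne
  obtain ⟨t₀, ht₀, hmin⟩ := (T.filter (d · ≠ 0)).exists_min_image id (by simpa [Finset.Nonempty])
  rw [mem_filter] at ht₀
  refine ht₀.2 ?_
  rw [← h t₀ ht₀.1, sum_eq_single_of_mem (s := T.filter (· ≤ t₀)) t₀ (mem_filter.2 ⟨ht₀.1, le_rfl⟩)]
  intro s hs hst
  rw [mem_filter] at hs
  by_contra hds
  exact hst (le_antisymm hs.2 (hmin s (mem_filter.2 ⟨hs.1, hds⟩)))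

variable {ι : Type*}

lemma eq_setOf_sum_le_of_chain {β : Type*} {S : Finset β} {F : β → Set ι} {w : β → ℝ}
    {x : ι → ℝ} (hchain : ∀ I ∈ S, ∀ J ∈ S, F I ⊆ F J ∨ F J ⊆ F I) (hw : ∀ I ∈ S, 0 < w I)
    (hx : ∀ p, x p = ∑ J ∈ S with p ∈ F J, w J) {I : β} (hI : I ∈ S) :
    F I = {p | ∑ J ∈ S with F I ⊆ F J, w J ≤ x p} := by
  ext p
  rw [Set.mem_ofPred_eq, hx p]
  constructor
  · intro hp
    refine sum_le_sum_of_subset_of_nonneg (fun J hJ => ?_)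
      fun J hJ _ => (hw J (mem_filter.1 hJ).1).le
    rw [mem_filter] at hJ ⊢
    exact ⟨hJ.1, hJ.2 hp⟩
  · intro hle
    by_contra hp
    refine hle.not_gt (sum_lt_sum_of_subset (fun J hJ => ?_) (mem_filter.2 ⟨hI, le_rfl⟩)
      (fun h => hp (mem_filter.1 h).2) (hw I hI) fun J hJ _ => (hw J (mem_filter.1 hJ).1).le)
    rw [mem_filter] at hJ ⊢
    refine ⟨hJ.1, (hchain I hI J hJ.1).resolve_right fun hJI => hp (hJI hJ.2)⟩

variable [Fintype ι] {x : ι → ℝ}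

noncomputable def levels (x : ι → ℝ) : Finset ℝ :=
  insert 1 ((univ.image x).filter (0 < ·))

lemma mem_levels {t : ℝ} : t ∈ levels x ↔ t = 1 ∨ 0 < t ∧ ∃ p, x p = t := by
  simp [levels, and_comm]

lemma pos_of_mem_levels {t : ℝ} (ht : t ∈ levels x) : 0 < t := by
  rcases mem_levels.1 ht with rfl | ⟨ht, -⟩
  exacts [one_pos, ht]

lemma le_one_of_mem_levels (hx1 : ∀ p, x p ≤ 1) {t : ℝ} (ht : t ∈ levels x) : t ≤ 1 := by
  rcases mem_levels.1 ht with rfl | ⟨-, p, rfl⟩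
  exacts [le_rfl, hx1 p]

lemma apply_mem_levels {p : ι} (hp : 0 < x p) : x p ∈ levels x :=
  mem_levels.2 (Or.inr ⟨hp, p, rfl⟩)

lemma le_of_setOf_le_subset (hx1 : ∀ p, x p ≤ 1) {s t : ℝ} (hs : s ∈ levels x)
    (ht : t ∈ levels x) (h : {p | s ≤ x p} ⊆ {p | t ≤ x p}) : t ≤ s := by
  rcases mem_levels.1 hs with rfl | ⟨-, q, rfl⟩
  exacts [le_one_of_mem_levels hx1 ht, h (le_refl (x q))]

lemma injOn_setOf_le_levels (hx1 : ∀ p, x p ≤ 1) :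
    Set.InjOn (fun t => {p | t ≤ x p}) (levels x) := fun _ hs _ ht h =>
  le_antisymm (le_of_setOf_le_subset hx1 ht hs h.ge) (le_of_setOf_le_subset hx1 hs ht h.le)

lemma exists_mem_levels_setOf_le_eq {c : ℝ} (hc0 : 0 < c) (hc1 : c ≤ 1) :
    ∃ t ∈ levels x, {p | c ≤ x p} = {p | t ≤ x p} := by
  set U := (levels x).filter (c ≤ ·)
  have hU : U.Nonempty := ⟨1, mem_filter.2 ⟨mem_insert_self _ _, hc1⟩⟩
  obtain ⟨htU, hct⟩ := mem_filter.1 (U.min'_mem hU)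
  refine ⟨U.min' hU, htU, Set.ext fun p => ⟨fun hp => U.min'_le _ ?_, hct.trans⟩⟩
  exact mem_filter.2 ⟨apply_mem_levels (hc0.trans_le hp), hp⟩

/-- The weight of the threshold set `{p | t ≤ x p}` in the layer-cake decomposition of `x`. -/
noncomputable def levelWeight (x : ι → ℝ) (t : ℝ) : ℝ :=
  t - prevLevel (levels x) t

lemma levelWeight_pos {t : ℝ} (ht : t ∈ levels x) : 0 < levelWeight x t :=
  sub_pos.2 (prevLevel_lt (pos_of_mem_levels ht))

lemma sum_filter_le_levelWeight {c : ℝ} (hc0 : 0 ≤ c) (hc : c ∈ insert 0 (levels x)) :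
    ∑ t ∈ levels x with t ≤ c, levelWeight x t = c := by
  simp only [levelWeight]
  rw [sum_filter_le_sub_prevLevel (fun t ht => (pos_of_mem_levels ht).le)]
  exact max'_insert_zero_eq (by simpa using hc) (fun t ht => (mem_filter.1 ht).2) hc0

def IsLevelWeighting (x : ι → ℝ) (w : ℝ → ℝ) : Prop :=
  ∑ t ∈ levels x, w t = 1 ∧ ∀ p, x p = ∑ t ∈ levels x with t ≤ x p, w t

lemma isLevelWeighting_levelWeight (hx0 : ∀ p, 0 ≤ x p) (hx1 : ∀ p, x p ≤ 1) :
    IsLevelWeighting x (levelWeight x) := by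
  refine ⟨?_, fun p => ?_⟩
  · rw [← filter_true_of_mem fun t ht => le_one_of_mem_levels hx1 ht]
    exact sum_filter_le_levelWeight zero_le_one (mem_insert_of_mem (mem_insert_self _ _))
  · symm
    refine sum_filter_le_levelWeight (hx0 p) ?_
    rcases (hx0 p).eq_or_lt with h | h
    · exact h ▸ mem_insert_self _ _
    · exact mem_insert_of_mem (apply_mem_levels h)

lemma IsLevelWeighting.eqOn (hx1 : ∀ p, x p ≤ 1) {w w' : ℝ → ℝ} (hw : IsLevelWeighting x w)
    (hw' : IsLevelWeighting x w') : Set.EqOn w w' (levels x) := by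
  intro t ht
  refine sub_eq_zero.1 <|
    eq_zero_of_sum_filter_le_eq_zero (d := fun s => w s - w' s) (fun t ht => ?_) t ht
  rw [sum_sub_distrib, sub_eq_zero]
  rcases mem_levels.1 ht with rfl | ⟨-, p, rfl⟩
  · rw [filter_true_of_mem fun s hs => le_one_of_mem_levels hx1 hs, hw.1, hw'.1]
  · rw [← hw.2, ← hw'.2]

end Levels

section Tuples

variable {n k m : ℕ}

lemma StrictMono.add_sub_le {I : Fin k → ℕ} (hI : StrictMono I) {a b : Fin k} (hab : a ≤ b) :
    I a + (b - a : ℕ) ≤ I b := by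
  obtain ⟨d, hd⟩ : ∃ d, (b : ℕ) = a + d := ⟨b - a, by omega⟩
  induction d generalizing b with
  | zero => rw [Fin.ext (hd.trans (add_zero _))]; simp
  | succ d ih =>
    have hc : (a : ℕ) + d < k := by omega
    have := ih (b := ⟨a + d, hc⟩) (Fin.le_def.2 (by simp)) rfl
    have := hI (show (⟨a + d, hc⟩ : Fin k) < b from Fin.lt_def.2 (by simp; omega))
    simp only at *
    omega

lemma IsVkn.bounds (hkn : k ≤ n) {I : Fin k → ℕ} (hI : IsVkn n I) (a : Fin k) :
    a + 1 ≤ I a ∧ I a ≤ a + 1 + (n - k) := by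
  have hk : 0 < k := a.pos
  have h₀ := hI.1.add_sub_le (Fin.le_def.2 (Nat.zero_le _) : (⟨0, hk⟩ : Fin k) ≤ a)
  have h₁ := hI.1.add_sub_le (Fin.le_def.2 (by simp; omega) : a ≤ ⟨k - 1, by omega⟩)
  have := (hI.2 ⟨0, hk⟩).1
  have := (hI.2 ⟨k - 1, by omega⟩).2
  simp only at h₀ h₁
  omega

def staircase (m : ℕ) (I : Fin k → ℕ) : Set (Fin k × Fin m) :=
  {p | I p.1 ≤ p.1.val + p.2.val + 1}

lemma chiR_eq_indicator (I : Fin k → ℕ) : chiR m I = (staircase m I).indicator 1 := by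
  ext p
  simp [chiR, staircase, Set.indicator_apply]

lemma staircase_subset_of_le {I J : Fin k → ℕ} (h : I ≤ J) : staircase m J ⊆ staircase m I :=
  fun p hp => (h p.1).trans hp

lemma le_of_staircase_subset (hkn : k ≤ n) {I J : Fin k → ℕ} (hI : IsVkn n I) (hJ : IsVkn n J)
    (h : staircase (n - k) I ⊆ staircase (n - k) J) : J ≤ I := by
  intro a
  show J a ≤ I a
  obtain ⟨hIl, hIu⟩ := hI.bounds hkn a
  obtain ⟨-, hJu⟩ := hJ.bounds hkn a
  by_cases hIa : I a ≤ a + (n - k)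
  · have : J a ≤ a + (I a - a - 1) + 1 :=
      @h (a, ⟨I a - a - 1, by omega⟩) (show I a ≤ a + (I a - a - 1) + 1 by omega)
    omega
  · omega

lemma staircase_injOn (hkn : k ≤ n) : Set.InjOn (staircase (n - k)) {I : Fin k → ℕ | IsVkn n I} :=
  fun _ hI _ hJ h => le_antisymm (le_of_staircase_subset hkn hJ hI h.ge)
    (le_of_staircase_subset hkn hI hJ h.le)

lemma NonNesting.le_or_ge {I J : Fin k → ℕ} (hI : StrictMono I) (hJ : StrictMono J)
    (h : NonNesting I J) : I ≤ J ∨ J ≤ I := by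
  refine or_iff_not_imp_left.2 fun hIJ b => ?_
  obtain ⟨a, ha⟩ : ∃ a, J a < I a := by simpa [Pi.le_def] using hIJ
  by_contra! hb
  rcases lt_trichotomy a b with hab | rfl | hab
  · exact h a b hab (Or.inr ⟨ha, hI hab, hb⟩)
  · exact lt_asymm ha hb
  · exact h b a hab (Or.inl ⟨hb, hJ hab, ha⟩)

lemma nonNesting_of_le_or_ge {I J : Fin k → ℕ} (h : I ≤ J ∨ J ≤ I) : NonNesting I J := by
  rintro a b - (⟨h₁, -, h₃⟩ | ⟨h₁, -, h₃⟩) <;> rcases h with hle | hle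
  exacts [(hle b).not_gt h₃, (hle a).not_gt h₁, (hle a).not_gt h₁, (hle b).not_gt h₃]

/-- The inequality description of the order polytope `O_{k,n}`. -/
structure IsOrderPolytopePoint (x : Fin k × Fin m → ℝ) : Prop where
  nonneg : ∀ p, 0 ≤ x p
  le_one : ∀ p, x p ≤ 1
  mono : ∀ {a a' : Fin k} {b b' : Fin m}, a' ≤ a → b ≤ b' → x (a, b) ≤ x (a', b')

lemma convex_setOf_isOrderPolytopePoint :
    Convex ℝ {x : Fin k × Fin m → ℝ | IsOrderPolytopePoint x} := by
  intro y hy z hz s t hs ht hst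
  refine ⟨fun p => ?_, fun p => ?_, fun ha hb => ?_⟩ <;>
    simp only [Pi.add_apply, Pi.smul_apply, smul_eq_mul]
  · nlinarith [hy.nonneg p, hz.nonneg p]
  · nlinarith [hy.le_one p, hz.le_one p]
  · nlinarith [hy.mono ha hb, hz.mono ha hb]

lemma isOrderPolytopePoint_chiR {I : Fin k → ℕ} (hI : StrictMono I) :
    IsOrderPolytopePoint (chiR m I) := by
  refine ⟨fun p => ?_, fun p => ?_, fun {a a' b b'} ha hb => ?_⟩ <;> unfold chiR
  · split_ifs <;> norm_num
  · split_ifs <;> norm_num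
  · have := hI.add_sub_le ha
    have : (a' : ℕ) ≤ a := ha
    have : (b : ℕ) ≤ b' := hb
    dsimp only
    split_ifs <;> first | omega | norm_num

lemma isOrderPolytopePoint_of_mem_convexHull {x : Fin k × Fin (n - k) → ℝ}
    (hx : x ∈ convexHull ℝ {y | ∃ I : Fin k → ℕ, IsVkn n I ∧ y = chiR (n - k) I}) :
    IsOrderPolytopePoint x :=
  convexHull_min (by rintro _ ⟨I, hI, rfl⟩; exact isOrderPolytopePoint_chiR hI.1)
    convex_setOf_isOrderPolytopePoint hx

noncomputable def threshold (x : Fin k × Fin m → ℝ) (t : ℝ) : Fin k → ℕ :=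
  fun a => a + 1 + #{b | x (a, b) < t}

lemma staircase_threshold {x : Fin k × Fin m → ℝ} (hx : IsOrderPolytopePoint x) (t : ℝ) :
    staircase m (threshold x t) = {p | t ≤ x p} := by
  ext ⟨a, b⟩
  simp only [staircase, threshold, Set.mem_ofPred_eq]
  constructor
  · intro h
    by_contra! hlt
    have : b.val + 1 ≤ #{b' | x (a, b') < t} := by
      rw [← Fin.card_Iic b]
      exact card_le_card fun b' hb' =>
        mem_filter.2 ⟨mem_univ _, (hx.mono le_rfl (mem_Iic.1 hb')).trans_lt hlt⟩
    omega
  · intro h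
    have : #{b' | x (a, b') < t} ≤ b.val := by
      rw [← Fin.card_Iio b]
      exact card_le_card fun b' hb' => mem_Iio.2 (lt_of_not_ge fun hbb' =>
        ((hx.mono le_rfl hbb').trans_lt (mem_filter.1 hb').2).not_ge h)
    omega

lemma threshold_mono (x : Fin k × Fin m → ℝ) : Monotone (threshold x) := fun _ _ hst a => by
  unfold threshold
  gcongr

lemma threshold_isVkn (hkn : k ≤ n) {x : Fin k × Fin (n - k) → ℝ} (hx : IsOrderPolytopePoint x)
    (t : ℝ) : IsVkn n (threshold x t) := by
  refine ⟨fun a a' haa' => ?_, fun a => ?_⟩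
  · have : #{b | x (a, b) < t} ≤ #{b | x (a', b) < t} :=
      card_le_card fun b hb =>
        mem_filter.2 ⟨mem_univ _, (hx.mono haa'.le le_rfl).trans_lt (mem_filter.1 hb).2⟩
    simp only [threshold]
    have : (a : ℕ) < a' := haa'
    omega
  · have := card_le_univ (filter (fun b => x (a, b) < t) univ)
    simp only [Fintype.card_fin] at this
    simp only [threshold]
    omega

lemma threshold_injOn {x : Fin k × Fin m → ℝ} (hx : IsOrderPolytopePoint x) :
    Set.InjOn (threshold x) (levels x) := fun _ hs _ ht h =>
  injOn_setOf_le_levels hx.le_one hs ht <| by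
    simpa only [staircase_threshold hx] using congrArg (staircase m) h

lemma chiR_threshold_apply {x : Fin k × Fin m → ℝ} (hx : IsOrderPolytopePoint x) (t : ℝ)
    (p : Fin k × Fin m) : chiR m (threshold x t) p = if t ≤ x p then 1 else 0 := by
  rw [chiR_eq_indicator, staircase_threshold hx, Set.indicator_apply]
  rfl

lemma apply_eq_sum_filter_mem_staircase {x : Fin k × Fin m → ℝ} {S : Finset (Fin k → ℕ)}
    {α : (Fin k → ℕ) → ℝ} (h : x = ∑ I ∈ S, α I • chiR m I) (p : Fin k × Fin m) :
    x p = ∑ I ∈ S with p ∈ staircase m I, α I := by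
  rw [h, Finset.sum_apply, sum_filter]
  simp [chiR_eq_indicator, Set.indicator_apply]

noncomputable def canonicalSupport (x : Fin k × Fin m → ℝ) : Finset (Fin k → ℕ) :=
  (levels x).image (threshold x)

noncomputable def canonicalCoeff (x : Fin k × Fin m → ℝ) (I : Fin k → ℕ) : ℝ :=
  levelWeight x (Function.invFunOn (threshold x) (levels x) I)

lemma canonicalCoeff_threshold {x : Fin k × Fin m → ℝ} (hx : IsOrderPolytopePoint x) {t : ℝ}
    (ht : t ∈ levels x) : canonicalCoeff x (threshold x t) = levelWeight x t := by
  rw [canonicalCoeff, (threshold_injOn hx).leftInvOn_invFunOn ht]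

lemma sum_eq_sum_levels {M : Type*} [AddCommMonoid M] {x : Fin k × Fin m → ℝ}
    (hx : IsOrderPolytopePoint x) {S : Finset (Fin k → ℕ)} (hS : S ⊆ canonicalSupport x)
    (f : (Fin k → ℕ) → M) :
    ∑ I ∈ S, f I = ∑ t ∈ levels x, if threshold x t ∈ S then f (threshold x t) else 0 := by
  rw [← sum_image (f := fun I => if I ∈ S then f I else 0) (threshold_injOn hx), sum_ite_mem,
    show (levels x).image (threshold x) ∩ S = S from inter_eq_right.2 hS]

end Tuples

section Decomposition

variable {n k : ℕ} {x : Fin k × Fin (n - k) → ℝ}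

def IsNonnestingDecomposition (n : ℕ) (x : Fin k × Fin (n - k) → ℝ) (S : Finset (Fin k → ℕ))
    (α : (Fin k → ℕ) → ℝ) : Prop :=
  (∀ I ∈ S, IsVkn n I) ∧ (∀ I ∈ S, ∀ J ∈ S, NonNesting I J) ∧
    (∀ I ∈ S, 0 < α I) ∧ (∑ I ∈ S, α I) = 1 ∧ x = ∑ I ∈ S, α I • chiR (n - k) I

theorem isNonnestingDecomposition_canonical (hkn : k ≤ n) (hx : IsOrderPolytopePoint x) :
    IsNonnestingDecomposition n x (canonicalSupport x) (canonicalCoeff x) := by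
  have hw := isLevelWeighting_levelWeight hx.nonneg hx.le_one
  refine ⟨?_, ?_, ?_, ?_, ?_⟩
  · simp only [canonicalSupport, forall_mem_image]
    exact fun t _ => threshold_isVkn hkn hx t
  · simp only [canonicalSupport, forall_mem_image]
    exact fun s _ t _ => nonNesting_of_le_or_ge
      ((le_total s t).imp (fun h => threshold_mono x h) (fun h => threshold_mono x h))
  · simp only [canonicalSupport, forall_mem_image]
    exact fun t ht => (canonicalCoeff_threshold hx ht).symm ▸ levelWeight_pos ht
  · rw [canonicalSupport, sum_image (threshold_injOn hx),
      sum_congr rfl fun t ht => canonicalCoeff_threshold hx ht]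
    exact hw.1
  · ext p
    rw [Finset.sum_apply, canonicalSupport, sum_image (threshold_injOn hx), hw.2 p, sum_filter]
    refine sum_congr rfl fun t ht => ?_
    rw [Pi.smul_apply, chiR_threshold_apply hx, canonicalCoeff_threshold hx ht]
    split_ifs <;> simp

lemma IsNonnestingDecomposition.subset_canonicalSupport (hkn : k ≤ n) (hx : IsOrderPolytopePoint x)
    {S : Finset (Fin k → ℕ)} {α : (Fin k → ℕ) → ℝ} (h : IsNonnestingDecomposition n x S α) :
    S ⊆ canonicalSupport x := by
  obtain ⟨hV, hNN, hpos, hsum, hdec⟩ := h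
  intro I hI
  have hchain : ∀ I ∈ S, ∀ J ∈ S, staircase (n - k) I ⊆ staircase (n - k) J ∨
      staircase (n - k) J ⊆ staircase (n - k) I := fun I hI J hJ =>
    ((hNN I hI J hJ).le_or_ge (hV I hI).1 (hV J hJ).1).symm.imp staircase_subset_of_le
      staircase_subset_of_le
  have hI_eq := eq_setOf_sum_le_of_chain hchain hpos (apply_eq_sum_filter_mem_staircase hdec) hI
  set c := ∑ J ∈ S with staircase (n - k) I ⊆ staircase (n - k) J, α J
  have hc0 : 0 < c := (hpos I hI).trans_le <| single_le_sum
    (fun J hJ => (hpos J (mem_filter.1 hJ).1).le) (mem_filter.2 ⟨hI, subset_rfl⟩)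
  have hc1 : c ≤ 1 := hsum ▸ sum_le_sum_of_subset_of_nonneg (filter_subset _ _)
    fun J hJ _ => (hpos J hJ).le
  obtain ⟨t, ht, hct⟩ := exists_mem_levels_setOf_le_eq (x := x) hc0 hc1
  refine mem_image.2 ⟨t, ht, staircase_injOn hkn (threshold_isVkn hkn hx t) (hV I hI) ?_⟩
  rw [staircase_threshold hx, hI_eq, hct]

theorem IsNonnestingDecomposition.eq_canonical (hkn : k ≤ n) (hx : IsOrderPolytopePoint x)
    {S : Finset (Fin k → ℕ)} {α : (Fin k → ℕ) → ℝ} (h : IsNonnestingDecomposition n x S α) :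
    S = canonicalSupport x ∧ ∀ I ∈ canonicalSupport x, α I = canonicalCoeff x I := by
  have hS := h.subset_canonicalSupport hkn hx
  obtain ⟨-, -, -, hsum, hdec⟩ := h
  set w : ℝ → ℝ := fun t => if threshold x t ∈ S then α (threshold x t) else 0
  have hw : IsLevelWeighting x w := by
    refine ⟨by rw [← hsum, sum_eq_sum_levels hx hS], fun p => ?_⟩
    have hp : x p = ∑ I ∈ S, α I * chiR (n - k) I p := by
      simpa only [Finset.sum_apply, Pi.smul_apply, smul_eq_mul] using congrFun hdec p
    refine hp.trans ?_
    rw [sum_eq_sum_levels hx hS, sum_filter]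
    refine sum_congr rfl fun t _ => ?_
    simp only [w, chiR_threshold_apply hx]
    split_ifs <;> simp
  have hweq := hw.eqOn hx.le_one (isLevelWeighting_levelWeight hx.nonneg hx.le_one)
  have hmem : ∀ t ∈ levels x, threshold x t ∈ S := fun t ht => by
    by_contra hnot
    exact (levelWeight_pos ht).ne (by rw [← hweq ht]; simp [w, hnot])
  refine ⟨hS.antisymm fun I hI => ?_, ?_⟩
  · obtain ⟨t, ht, rfl⟩ := mem_image.1 hI
    exact hmem t ht
  · simp only [canonicalSupport, forall_mem_image]
    intro t ht
    rw [canonicalCoeff_threshold hx ht, ← hweq ht]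
    simp [w, hmem t ht]

end Decomposition

theorem stmt12_general {n k : ℕ} (hkn : k < n)
    (x : Fin k × Fin (n - k) → ℝ)
    (hx : x ∈ convexHull ℝ {y | ∃ I : Fin k → ℕ, IsVkn n I ∧ y = chiR (n - k) I}) :
    ∃ (S : Finset (Fin k → ℕ)) (α : (Fin k → ℕ) → ℝ),
      ((∀ I ∈ S, IsVkn n I) ∧ (∀ I ∈ S, ∀ J ∈ S, NonNesting I J) ∧
        (∀ I ∈ S, 0 < α I) ∧ (∑ I ∈ S, α I) = 1 ∧
        x = ∑ I ∈ S, α I • chiR (n - k) I) ∧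
      ∀ (S' : Finset (Fin k → ℕ)) (α' : (Fin k → ℕ) → ℝ),
        ((∀ I ∈ S', IsVkn n I) ∧ (∀ I ∈ S', ∀ J ∈ S', NonNesting I J) ∧
          (∀ I ∈ S', 0 < α' I) ∧ (∑ I ∈ S', α' I) = 1 ∧
          x = ∑ I ∈ S', α' I • chiR (n - k) I) →
        S' = S ∧ ∀ I ∈ S, α' I = α I := by
  have hxP := isOrderPolytopePoint_of_mem_convexHull hx
  exact ⟨canonicalSupport x, canonicalCoeff x, isNonnestingDecomposition_canonical hkn.le hxP,
    fun _ _ h => IsNonnestingDecomposition.eq_canonical hkn.le hxP h⟩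

/-- the nonnesting complex triangulates the order polytope
`O_{k,n} = conv{χ_I : I ∈ V_{k,n}}`: every point of `O_{k,n}` is in a unique way a
convex combination with strictly positive coefficients of the characteristic vectors
of a pairwise nonnesting subset of `V_{k,n}`. -/
theorem stmt12 {n k : ℕ} (hk : 0 < k) (hkn : k < n)
    (x : Fin k × Fin (n - k) → ℝ)
    (hx : x ∈ convexHull ℝ {y | ∃ I : Fin k → ℕ, IsVkn n I ∧ y = chiR (n - k) I}) :
    ∃ (S : Finset (Fin k → ℕ)) (α : (Fin k → ℕ) → ℝ),
      ((∀ I ∈ S, IsVkn n I) ∧ (∀ I ∈ S, ∀ J ∈ S, NonNesting I J) ∧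
        (∀ I ∈ S, 0 < α I) ∧ (∑ I ∈ S, α I) = 1 ∧
        x = ∑ I ∈ S, α I • chiR (n - k) I) ∧
      ∀ (S' : Finset (Fin k → ℕ)) (α' : (Fin k → ℕ) → ℝ),
        ((∀ I ∈ S', IsVkn n I) ∧ (∀ I ∈ S', ∀ J ∈ S', NonNesting I J) ∧
          (∀ I ∈ S', 0 < α' I) ∧ (∑ I ∈ S', α' I) = 1 ∧
          x = ∑ I ∈ S', α' I • chiR (n - k) I) →
        S' = S ∧ ∀ I ∈ S, α' I = α I :=
  stmt12_general hkn x hx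
end

section
/- Let P be a finite poset and let E ⊆ F be two order filters of P. Let P'_1, …, P'_d be the connected components of the induced subposet on F \ E (connected components of its comparability graph). Let C = conv{ χ_E + Σ_{b ∈ S} χ_{P'_b} : S ⊆ {1,…,d} } ⊆ ℝ^P. Then C is a face of the order polytope O(P) (i.e., an extreme convex subset of O(P)) containing χ_E and χ_F, and C is contained in every face of O(P) that contains both χ_E and χ_F; moreover C equals the Minkowski sum χ_E + [0,1]·χ_{P'_1} + ⋯ + [0,1]·χ_{P'_d}, so C is affinely isomorphic to a cube of dimension d. -/
/-!
The map `t ↦ χ_E + ∑ v, t v • χ_{P'_v}` is affine, so it carries the `0/1`-cube onto the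
generating set of `C` and the unit cube onto `C`. Its image is the set of points of `O(P)` that
are `1` on `E`, `0` off `F`, and satisfy `x a = x b` for `a ≤ b` in `F \ E` (constancy on
components then follows along walks). Each of these equations makes a defining inequality of
`O(P)` tight, so this set is a face. The midpoint of `χ_E` and `χ_F`, the images of the corners
`0` and `1`, is the image of the centre of the cube, which is also the midpoint of every vertex
and its antipode; hence a face through `χ_E` and `χ_F` contains every vertex, and so all of `C`.
-/

/-- The comparability graph of the induced subposet on `F \ E`: two distinct
elements are adjacent iff they are comparable. -/
def compGraph {P : Type*} [PartialOrder P] (F E : Set P) : SimpleGraph ↥(F \ E) :=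
  SimpleGraph.fromRel (fun a b => (a : P) ≤ (b : P))

/-- The connected component `v` of the comparability graph of `F \ E`, viewed as a
subset of `P`. -/
def compSet {P : Type*} [PartialOrder P] (F E : Set P)
    (v : (compGraph F E).ConnectedComponent) : Set P :=
  {a : P | ∃ h : a ∈ F \ E, (compGraph F E).connectedComponentMk ⟨a, h⟩ = v}

/-- The characteristic vector of a subset `A ⊆ P`, as a point of `ℝ^P`. -/
noncomputable def chiSet {P : Type*} (A : Set P) : P → ℝ := A.indicator 1

/-- The order polytope `O(P) = {x ∈ [0,1]^P : x_a ≤ x_b whenever a ≤ b}`. -/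
def orderPolytope (P : Type*) [PartialOrder P] : Set (P → ℝ) :=
  {x | (∀ a, 0 ≤ x a ∧ x a ≤ 1) ∧ ∀ a b : P, a ≤ b → x a ≤ x b}

theorem LinearMap.map_eq_of_mem_openSegment_of_le {𝕜 V : Type*} [Field 𝕜] [LinearOrder 𝕜]
    [IsStrictOrderedRing 𝕜] [AddCommGroup V] [Module 𝕜 V] (ℓ : V →ₗ[𝕜] 𝕜) {x y z : V} {c : 𝕜}
    (hx : x ∈ openSegment 𝕜 y z) (hy : ℓ y ≤ c) (hz : ℓ z ≤ c) (hxc : ℓ x = c) :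
    ℓ y = c ∧ ℓ z = c := by
  obtain ⟨a, b, ha, hb, hab, rfl⟩ := hx
  obtain rfl : b = 1 - a := eq_sub_of_add_eq' hab
  rw [map_add, map_smul, map_smul, smul_eq_mul, smul_eq_mul] at hxc
  constructor <;> nlinarith

theorem convexHull_pi_zero_one (ι : Type*) [Finite ι] :
    convexHull ℝ (Set.univ.pi fun _ : ι => ({0, 1} : Set ℝ)) =
      Set.univ.pi fun _ => Set.Icc 0 1 := by
  rw [convexHull_pi, convexHull_pair, segment_eq_Icc zero_le_one]

namespace OrderPolytope

section ChiSet

variable {P : Type*} {A : Set P} {a : P}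

theorem chiSet_of_mem (h : a ∈ A) : chiSet A a = 1 :=
  Set.indicator_of_mem h 1

theorem chiSet_of_notMem (h : a ∉ A) : chiSet A a = 0 :=
  Set.indicator_of_notMem h 1

theorem chiSet_mem_Icc : chiSet A a ∈ Set.Icc 0 1 := by
  by_cases h : a ∈ A <;> simp [chiSet_of_mem, chiSet_of_notMem, h]

end ChiSet

variable {P : Type*} [PartialOrder P] {E F : Set P}

theorem coe_mem_compSet_iff (u : ↥(F \ E)) (v : (compGraph F E).ConnectedComponent) :
    (u : P) ∈ compSet F E v ↔ (compGraph F E).connectedComponentMk u = v :=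
  ⟨fun ⟨_, h⟩ => h, fun h => ⟨u.2, h⟩⟩

theorem compSet_subset_diff (v : (compGraph F E).ConnectedComponent) : compSet F E v ⊆ F \ E :=
  fun _ ⟨h, _⟩ => h

theorem connectedComponentMk_eq_of_le {u w : ↥(F \ E)} (h : (u : P) ≤ w) :
    (compGraph F E).connectedComponentMk u = (compGraph F E).connectedComponentMk w := by
  obtain rfl | hne := eq_or_ne u w
  · rfl
  · exact SimpleGraph.ConnectedComponent.sound
      (SimpleGraph.fromRel_adj _ u w |>.mpr ⟨hne, Or.inl h⟩).reachable

theorem apply_eq_of_reachable {x : P → ℝ}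
    (hx : ∀ a ∈ F \ E, ∀ b ∈ F \ E, a ≤ b → x a = x b) {u w : ↥(F \ E)}
    (h : (compGraph F E).Reachable u w) : x u = x w := by
  obtain ⟨p⟩ := h
  induction p with
  | nil => rfl
  | cons hadj _ ih =>
    rcases ((SimpleGraph.fromRel_adj _ _ _).1 hadj).2 with hle | hle
    · exact (hx _ (Subtype.prop _) _ (Subtype.prop _) hle).trans ih
    · exact (hx _ (Subtype.prop _) _ (Subtype.prop _) hle).symm.trans ih

variable (E F) in
def filterFace : Set (P → ℝ) :=
  {x ∈ orderPolytope P | (∀ a ∈ E, x a = 1) ∧ (∀ a ∉ F, x a = 0) ∧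
    ∀ a ∈ F \ E, ∀ b ∈ F \ E, a ≤ b → x a = x b}

theorem isExtreme_filterFace : IsExtreme ℝ (orderPolytope P) (filterFace E F) := by
  refine ⟨fun x hx => hx.1, fun y hy z hz x ⟨_, h1, h0, hcomp⟩ hseg => ⟨hy, ?_, ?_, ?_⟩⟩
  · intro a ha
    exact ((LinearMap.proj a).map_eq_of_mem_openSegment_of_le hseg (hy.1 a).2 (hz.1 a).2
      (h1 a ha)).1
  · intro a ha
    have := ((-LinearMap.proj a).map_eq_of_mem_openSegment_of_le hseg
      (c := 0) (by simpa using (hy.1 a).1) (by simpa using (hz.1 a).1) (by simp [h0 a ha])).1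
    simpa using this
  · intro a ha b hb hab
    let ℓ : (P → ℝ) →ₗ[ℝ] ℝ := LinearMap.proj a - LinearMap.proj (R := ℝ) (φ := fun _ : P => ℝ) b
    have hℓ : ∀ w, ℓ w = w a - w b := fun _ => rfl
    have := (ℓ.map_eq_of_mem_openSegment_of_le hseg (c := 0)
      (by simpa [hℓ] using hy.2 a b hab) (by simpa [hℓ] using hz.2 a b hab)
      (by simpa [hℓ, sub_eq_zero] using hcomp a ha b hb hab)).1
    rwa [hℓ, sub_eq_zero] at this

section Cube

variable [Finite P]

variable (E F) in
noncomputable def cubeMap : ((compGraph F E).ConnectedComponent → ℝ) →ᵃ[ℝ] (P → ℝ) :=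
  letI := Fintype.ofFinite (compGraph F E).ConnectedComponent
  AffineMap.const ℝ _ (chiSet E) +
    (Fintype.linearCombination ℝ fun v => chiSet (compSet F E v)).toAffineMap

theorem cubeMap_apply (t : (compGraph F E).ConnectedComponent → ℝ) :
    cubeMap E F t = chiSet E + ∑ᶠ v, t v • chiSet (compSet F E v) := by
  let := Fintype.ofFinite (compGraph F E).ConnectedComponent
  rw [finsum_eq_sum_of_fintype]
  rfl

theorem cubeMap_apply_coe (t : (compGraph F E).ConnectedComponent → ℝ) (u : ↥(F \ E)) :
    cubeMap E F t u = t ((compGraph F E).connectedComponentMk u) := by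
  let := Fintype.ofFinite (compGraph F E).ConnectedComponent
  rw [cubeMap_apply, Pi.add_apply, chiSet_of_notMem u.2.2, zero_add,
    finsum_eq_sum_of_fintype, Finset.sum_apply,
    Finset.sum_eq_single_of_mem _ (Finset.mem_univ ((compGraph F E).connectedComponentMk u))]
  · simp [chiSet_of_mem ((coe_mem_compSet_iff u _).2 rfl)]
  · intro v _ hv
    simp [chiSet_of_notMem (mt (coe_mem_compSet_iff u v).1 (Ne.symm hv))]

theorem cubeMap_apply_of_notMem_diff (t : (compGraph F E).ConnectedComponent → ℝ) {a : P}
    (ha : a ∉ F \ E) : cubeMap E F t a = chiSet E a := by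
  let := Fintype.ofFinite (compGraph F E).ConnectedComponent
  have hv : ∀ v, a ∉ compSet F E v := fun v h => ha (compSet_subset_diff v h)
  simp [cubeMap_apply, finsum_eq_sum_of_fintype, Finset.sum_apply, chiSet_of_notMem (hv _)]

theorem cubeMap_apply_of_mem (t : (compGraph F E).ConnectedComponent → ℝ) {a : P}
    (ha : a ∈ E) : cubeMap E F t a = 1 := by
  rw [cubeMap_apply_of_notMem_diff t fun h => h.2 ha, chiSet_of_mem ha]

theorem cubeMap_apply_of_notMem (hEF : E ⊆ F) (t : (compGraph F E).ConnectedComponent → ℝ)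
    {a : P} (ha : a ∉ F) : cubeMap E F t a = 0 := by
  rw [cubeMap_apply_of_notMem_diff t fun h => ha h.1, chiSet_of_notMem fun h => ha (hEF h)]

theorem eq_cubeMap_of (hEF : E ⊆ F) {x : P → ℝ} {t : (compGraph F E).ConnectedComponent → ℝ}
    (h1 : ∀ a ∈ E, x a = 1) (h0 : ∀ a ∉ F, x a = 0)
    (hcomp : ∀ u : ↥(F \ E), x u = t ((compGraph F E).connectedComponentMk u)) :
    x = cubeMap E F t := by
  funext a
  by_cases haE : a ∈ E
  · rw [h1 a haE, cubeMap_apply_of_mem t haE]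
  by_cases haF : a ∈ F
  · exact (hcomp ⟨a, haF, haE⟩).trans (cubeMap_apply_coe t ⟨a, haF, haE⟩).symm
  · rw [h0 a haF, cubeMap_apply_of_notMem hEF t haF]

theorem cubeMap_zero : cubeMap E F 0 = chiSet E := by
  simp [cubeMap_apply]

theorem cubeMap_one (hEF : E ⊆ F) : cubeMap E F 1 = chiSet F :=
  (eq_cubeMap_of hEF (fun _ ha => chiSet_of_mem (hEF ha)) (fun _ ha => chiSet_of_notMem ha)
    fun u => chiSet_of_mem u.2.1).symm

theorem cubeMap_indicator (S : Set (compGraph F E).ConnectedComponent) :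
    cubeMap E F (S.indicator 1) = chiSet E + ∑ᶠ v ∈ S, chiSet (compSet F E v) := by
  rw [cubeMap_apply, finsum_mem_def]
  congr 1
  refine finsum_congr fun v => ?_
  by_cases hv : v ∈ S <;> simp [hv]

theorem vertexSet_eq_image :
    {x | ∃ S : Set (compGraph F E).ConnectedComponent,
      x = chiSet E + ∑ᶠ v ∈ S, chiSet (compSet F E v)} =
      cubeMap E F '' Set.univ.pi fun _ => {0, 1} := by
  ext x
  constructor
  · rintro ⟨S, rfl⟩
    refine ⟨S.indicator 1, fun v _ => ?_, cubeMap_indicator S⟩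
    by_cases hv : v ∈ S <;> simp [hv]
  · rintro ⟨t, ht, rfl⟩
    refine ⟨{v | t v = 1}, ?_⟩
    rw [← cubeMap_indicator]
    congr 1
    funext v
    obtain h | h : t v = 0 ∨ t v = 1 := ht v trivial <;> simp [h]

theorem cubeMap_mem_orderPolytope (hE : ∀ a ∈ E, ∀ b, a ≤ b → b ∈ E)
    (hF : ∀ a ∈ F, ∀ b, a ≤ b → b ∈ F) (hEF : E ⊆ F) {t : (compGraph F E).ConnectedComponent → ℝ}
    (ht : ∀ v, t v ∈ Set.Icc 0 1) : cubeMap E F t ∈ orderPolytope P := by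
  have hbound : ∀ a, cubeMap E F t a ∈ Set.Icc 0 1 := by
    intro a
    by_cases ha : a ∈ F \ E
    · exact (cubeMap_apply_coe t ⟨a, ha⟩).symm ▸ ht _
    · exact (cubeMap_apply_of_notMem_diff t ha).symm ▸ chiSet_mem_Icc
  refine ⟨hbound, fun a b hab => ?_⟩
  by_cases hbE : b ∈ E
  · exact (cubeMap_apply_of_mem t hbE).symm ▸ (hbound a).2
  have haE : a ∉ E := fun h => hbE (hE a h b hab)
  by_cases haF : a ∈ F
  · rw [cubeMap_apply_coe t ⟨a, haF, haE⟩, cubeMap_apply_coe t ⟨b, hF a haF b hab, hbE⟩,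
      connectedComponentMk_eq_of_le (u := ⟨a, haF, haE⟩) (w := ⟨b, hF a haF b hab, hbE⟩) hab]
  · exact (cubeMap_apply_of_notMem hEF t haF).symm ▸ (hbound b).1

theorem image_cube_eq_filterFace (hE : ∀ a ∈ E, ∀ b, a ≤ b → b ∈ E)
    (hF : ∀ a ∈ F, ∀ b, a ≤ b → b ∈ F) (hEF : E ⊆ F) :
    cubeMap E F '' (Set.univ.pi fun _ => Set.Icc 0 1) = filterFace E F := by
  refine (Set.image_subset_iff.2 fun t ht => ?_).antisymm ?_
  · have ht := Set.mem_univ_pi.1 ht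
    refine ⟨cubeMap_mem_orderPolytope hE hF hEF ht, fun _ ha => cubeMap_apply_of_mem t ha,
      fun _ ha => cubeMap_apply_of_notMem hEF t ha, fun a ha b hb hab => ?_⟩
    rw [cubeMap_apply_coe t ⟨a, ha⟩, cubeMap_apply_coe t ⟨b, hb⟩,
      connectedComponentMk_eq_of_le (u := ⟨a, ha⟩) (w := ⟨b, hb⟩) hab]
  · rintro x ⟨hx, h1, h0, hcomp⟩
    refine ⟨fun v => x v.out, fun v _ => hx.1 _, (eq_cubeMap_of hEF h1 h0 fun u => ?_).symm⟩
    exact apply_eq_of_reachable hcomp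
      (SimpleGraph.ConnectedComponent.exact (Quot.out_eq _).symm)

theorem image_vertices_subset_of_isExtreme (hE : ∀ a ∈ E, ∀ b, a ≤ b → b ∈ E)
    (hF : ∀ a ∈ F, ∀ b, a ≤ b → b ∈ F) (hEF : E ⊆ F) {C' : Set (P → ℝ)}
    (hC' : IsExtreme ℝ (orderPolytope P) C') (hconv : Convex ℝ C')
    (hEC : chiSet E ∈ C') (hFC : chiSet F ∈ C') :
    cubeMap E F '' (Set.univ.pi fun _ => {0, 1}) ⊆ C' := by
  rintro _ ⟨t, ht, rfl⟩
  have hvert : ∀ s ∈ Set.univ.pi fun _ => ({0, 1} : Set ℝ), cubeMap E F s ∈ orderPolytope P :=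
    fun s hs => cubeMap_mem_orderPolytope hE hF hEF <| Set.mem_univ_pi.1 <|
      convexHull_pi_zero_one (compGraph F E).ConnectedComponent ▸ subset_convexHull ℝ _ hs
  have ht' : 1 - t ∈ Set.univ.pi fun _ => ({0, 1} : Set ℝ) := fun v _ => by
    obtain h | h : t v = 0 ∨ t v = 1 := ht v trivial <;> simp [h]
  have hmid : midpoint ℝ (chiSet E) (chiSet F) =
      midpoint ℝ (cubeMap E F t) (cubeMap E F (1 - t)) := by
    rw [← cubeMap_zero, ← cubeMap_one hEF, ← AffineMap.map_midpoint,
      ← AffineMap.map_midpoint, midpoint_eq_smul_add, midpoint_eq_smul_add, add_sub_cancel,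
      zero_add]
  refine hC'.left_mem_of_mem_openSegment (hvert t ht) (hvert _ ht')
    (hconv.openSegment_subset hEC hFC (midpoint_mem_openSegment _ _)) ?_
  rw [hmid]
  exact midpoint_mem_openSegment _ _

end Cube

end OrderPolytope

open OrderPolytope

/-- for order filters `E ⊆ F` of a finite poset `P`, with
`P'_v = compSet F E v` the connected components of `F \ E`, the set
`C = conv{χ_E + Σ_{v ∈ S} χ_{P'_v} : S a set of components}` is a face of the order
polytope `O(P)` containing `χ_E` and `χ_F`, it is contained in every face of `O(P)`
containing both, and it equals the Minkowski sum
`χ_E + [0,1]·χ_{P'_1} + ⋯ + [0,1]·χ_{P'_d}` (hence is a cube of dimension `d`). -/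
theorem stmt14 {P : Type*} [PartialOrder P] [Fintype P]
    (E F : Set P)
    (hE : ∀ a ∈ E, ∀ b, a ≤ b → b ∈ E)
    (hF : ∀ a ∈ F, ∀ b, a ≤ b → b ∈ F)
    (hEF : E ⊆ F)
    (C : Set (P → ℝ))
    (hC : C = convexHull ℝ
      {x | ∃ S : Set (compGraph F E).ConnectedComponent,
        x = chiSet E + ∑ᶠ v ∈ S, chiSet (compSet F E v)}) :
    IsExtreme ℝ (orderPolytope P) C ∧
    chiSet E ∈ C ∧ chiSet F ∈ C ∧
    (∀ C' : Set (P → ℝ), IsExtreme ℝ (orderPolytope P) C' → Convex ℝ C' →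
      chiSet E ∈ C' → chiSet F ∈ C' → C ⊆ C') ∧
    C = {x | ∃ t : (compGraph F E).ConnectedComponent → ℝ,
        (∀ v, 0 ≤ t v ∧ t v ≤ 1) ∧
        x = chiSet E + ∑ᶠ v, t v • chiSet (compSet F E v)} := by
  have hcube : C = cubeMap E F '' Set.univ.pi fun _ => Set.Icc 0 1 := by
    rw [hC, vertexSet_eq_image, ← AffineMap.image_convexHull,
      convexHull_pi_zero_one (compGraph F E).ConnectedComponent]
  have hface : C = filterFace E F := hcube.trans (image_cube_eq_filterFace hE hF hEF)
  refine ⟨hface ▸ isExtreme_filterFace, ?_, ?_, fun C' hC' hconv hEC hFC => ?_, ?_⟩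
  · rw [hcube]
    exact ⟨0, fun _ _ => by simp, cubeMap_zero⟩
  · rw [hcube]
    exact ⟨1, fun _ _ => by simp, cubeMap_one hEF⟩
  · rw [hC, vertexSet_eq_image]
    exact convexHull_min (image_vertices_subset_of_isExtreme hE hF hEF hC' hconv hEC hFC) hconv
  · ext x
    simp only [hcube, Set.mem_image, Set.mem_univ_pi, Set.mem_Icc, cubeMap_apply, eq_comm,
      Set.mem_ofPred_eq]
end

section
/- Let 0 < k < n and let I, J, X, Y ∈ V_{k,n} be such that {X, Y} ≠ {I, J} as unordered pairs and χ_I + χ_J = χ_X + χ_Y. If I and J are noncrossing, then X and Y are crossing (i.e., not noncrossing). -/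
/-- The characteristic vector `χ_I ∈ {0,1}^{[k]×[m]}` (`m = n−k`), given in 0-based
coordinates: `χ_I(a,b) = 1` iff `i_{a+1} ≤ (a+1)+(b+1)−1 = a+b+1`. -/
def chi (m : ℕ) {k : ℕ} (I : Fin k → ℕ) : Fin k × Fin m → ℕ :=
  fun p => if I p.1 ≤ p.1.val + p.2.val + 1 then 1 else 0

/-- The top element `(n−k+1, n−k+2, …, n)` of `V_{k,n}`. -/
def TopVec (n k : ℕ) : Fin k → ℕ := fun a => n - k + 1 + a.val

/-- A tableau of shape `k × m`: weakly increasing along rows from left to right and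
along columns from bottom to top (rows labeled from top to bottom). -/
def IsTableau {k m : ℕ} (T : Fin k × Fin m → ℕ) : Prop :=
  (∀ a : Fin k, ∀ b b' : Fin m, b ≤ b' → T (a, b) ≤ T (a, b')) ∧
  (∀ a a' : Fin k, ∀ b : Fin m, a ≤ a' → T (a', b) ≤ T (a, b))

lemma strictMono_gap {k : ℕ} {f : Fin k → ℕ} (hf : StrictMono f) :
    ∀ d (a b : Fin k), a.val + d ≤ b.val → f a + d ≤ f b := by
  intro d
  induction d with
  | zero =>
    intro a b h
    have := hf.monotone (show a ≤ b from Fin.le_def.mpr (by omega)); omega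
  | succ d ih =>
    intro a b h
    have hb := b.isLt
    have hc : a.val + d < k := by omega
    have h1 := ih a ⟨a.val + d, hc⟩ (by simp)
    have h2 : f ⟨a.val + d, hc⟩ < f b := hf (by simp [Fin.lt_def]; omega)
    omega

lemma vkn_bounds {n k : ℕ} {I : Fin k → ℕ} (hI : IsVkn n I) (a : Fin k) :
    a.val + 1 ≤ I a ∧ I a + (k - 1 - a.val) ≤ n := by
  have hk : 0 < k := a.pos
  constructor
  · have h1 := strictMono_gap hI.1 a.val ⟨0, hk⟩ a (by simp)
    have h2 := (hI.2 ⟨0, hk⟩).1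
    omega
  · have h1 := strictMono_gap hI.1 (k - 1 - a.val) a ⟨k - 1, by omega⟩ (by simp; omega)
    have h2 := (hI.2 ⟨k - 1, by omega⟩).2
    omega

/-- if `{X,Y} ≠ {I,J}` as unordered pairs, `χ_I + χ_J = χ_X + χ_Y`
and `I, J` are noncrossing, then `X` and `Y` are crossing. -/
theorem stmt15 {n k : ℕ} (hk : 0 < k) (hkn : k < n)
    (I J X Y : Fin k → ℕ)
    (hI : IsVkn n I) (hJ : IsVkn n J) (hX : IsVkn n X) (hY : IsVkn n Y)
    (hne : ¬ ((X = I ∧ Y = J) ∨ (X = J ∧ Y = I)))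
    (hsum : ∀ p : Fin k × Fin (n - k),
      chi (n - k) I p + chi (n - k) J p = chi (n - k) X p + chi (n - k) Y p)
    (hNC : NonCrossing I J) :
    ¬ NonCrossing X Y := by
  -- Step 1: pointwise dichotomy {X a, Y a} = {I a, J a}
  have D : ∀ a : Fin k, (X a = I a ∧ Y a = J a) ∨ (X a = J a ∧ Y a = I a) := by
    intro a
    have bI := vkn_bounds hI a
    have bJ := vkn_bounds hJ a
    have bX := vkn_bounds hX a
    have bY := vkn_bounds hY a
    have ha := a.isLt
    have h : ∀ t, a.val + 1 ≤ t → t ≤ a.val + (n - k) →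
        (if I a ≤ t then (1:ℕ) else 0) + (if J a ≤ t then 1 else 0)
          = (if X a ≤ t then 1 else 0) + (if Y a ≤ t then 1 else 0) := by
      intro t h1 h2
      have hb : t - a.val - 1 < n - k := by omega
      have h := hsum (a, ⟨t - a.val - 1, hb⟩)
      simp only [chi] at h
      have e : a.val + (t - a.val - 1) + 1 = t := by omega
      rw [e] at h
      exact h
    have hmin : min (I a) (J a) = min (X a) (Y a) := by
      by_contra hc
      rcases Nat.lt_or_ge (min (I a) (J a)) (min (X a) (Y a)) with h' | h'
      · have := h (min (I a) (J a)) (by omega) (by omega)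
        split_ifs at this <;> omega
      · have h'' : min (X a) (Y a) < min (I a) (J a) := by omega
        have := h (min (X a) (Y a)) (by omega) (by omega)
        split_ifs at this <;> omega
    have hmax : max (I a) (J a) = max (X a) (Y a) := by
      by_contra hc
      rcases Nat.lt_or_ge (max (I a) (J a)) (max (X a) (Y a)) with h' | h'
      · have := h (max (I a) (J a)) (by omega) (by omega)
        split_ifs at this <;> omega
      · have h'' : max (X a) (Y a) < max (I a) (J a) := by omega
        have := h (max (X a) (Y a)) (by omega) (by omega)
        split_ifs at this <;> omega
    omega
  -- Step 2: find a swap position and an identity position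
  have hswap : ∃ a, X a = J a ∧ Y a = I a ∧ I a ≠ J a := by
    have h1 : ¬ (X = I ∧ Y = J) := fun h => hne (Or.inl h)
    rcases not_and_or.mp h1 with h | h
    · obtain ⟨a, ha⟩ := Function.ne_iff.mp h
      rcases D a with ⟨e1, e2⟩ | ⟨e1, e2⟩
      · exact absurd e1 ha
      · exact ⟨a, e1, e2, fun he => ha (e1.trans he.symm)⟩
    · obtain ⟨a, ha⟩ := Function.ne_iff.mp h
      rcases D a with ⟨e1, e2⟩ | ⟨e1, e2⟩
      · exact absurd e2 ha
      · exact ⟨a, e1, e2, fun he => ha (e2.trans he)⟩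
  have hid : ∃ b, X b = I b ∧ Y b = J b ∧ I b ≠ J b := by
    have h1 : ¬ (X = J ∧ Y = I) := fun h => hne (Or.inr h)
    rcases not_and_or.mp h1 with h | h
    · obtain ⟨a, ha⟩ := Function.ne_iff.mp h
      rcases D a with ⟨e1, e2⟩ | ⟨e1, e2⟩
      · exact ⟨a, e1, e2, fun he => ha (e1.trans he)⟩
      · exact absurd e1 ha
    · obtain ⟨a, ha⟩ := Function.ne_iff.mp h
      rcases D a with ⟨e1, e2⟩ | ⟨e1, e2⟩
      · exact ⟨a, e1, e2, fun he => ha (e2.trans he.symm)⟩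
      · exact absurd e2 ha
  -- Step 3: find an adjacent opposite pair
  have key : ∀ d (a b : Fin k), b.val - a.val ≤ d → a < b →
      I a ≠ J a → I b ≠ J b →
      ((X a = I a ∧ Y a = J a ∧ X b = J b ∧ Y b = I b) ∨
       (X a = J a ∧ Y a = I a ∧ X b = I b ∧ Y b = J b)) →
      ∃ a' b' : Fin k, a' < b' ∧ (∀ l, a' < l → l < b' → I l = J l) ∧
        I a' ≠ J a' ∧ I b' ≠ J b' ∧
        ((X a' = I a' ∧ Y a' = J a' ∧ X b' = J b' ∧ Y b' = I b') ∨
         (X a' = J a' ∧ Y a' = I a' ∧ X b' = I b' ∧ Y b' = J b')) := by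
    intro d
    induction d with
    | zero =>
      intro a b hd hab
      exact absurd (Fin.lt_def.mp hab) (by omega)
    | succ d ih =>
      intro a b hd hab hna hnb hpat
      by_cases hl : ∃ l : Fin k, a < l ∧ l < b ∧ I l ≠ J l
      · obtain ⟨l, h1, h2, h3⟩ := hl
        have e1 := Fin.lt_def.mp h1
        have e2 := Fin.lt_def.mp h2
        rcases D l with ⟨f1, f2⟩ | ⟨f1, f2⟩
        · rcases hpat with ⟨p1, p2, p3, p4⟩ | ⟨p1, p2, p3, p4⟩
          · exact ih l b (by omega) h2 h3 hnb (Or.inl ⟨f1, f2, p3, p4⟩)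
          · exact ih a l (by omega) h1 hna h3 (Or.inr ⟨p1, p2, f1, f2⟩)
        · rcases hpat with ⟨p1, p2, p3, p4⟩ | ⟨p1, p2, p3, p4⟩
          · exact ih a l (by omega) h1 hna h3 (Or.inl ⟨p1, p2, f1, f2⟩)
          · exact ih l b (by omega) h2 h3 hnb (Or.inr ⟨f1, f2, p3, p4⟩)
      · push_neg at hl
        exact ⟨a, b, hab, hl, hna, hnb, hpat⟩
  obtain ⟨a0, s1, s2, s3⟩ := hswap
  obtain ⟨b0, t1, t2, t3⟩ := hid
  have hab0 : a0 ≠ b0 := by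
    intro h
    subst h
    exact s3 (t1.symm.trans s1)
  have main : ∃ a' b' : Fin k, a' < b' ∧ (∀ l, a' < l → l < b' → I l = J l) ∧
      I a' ≠ J a' ∧ I b' ≠ J b' ∧
      ((X a' = I a' ∧ Y a' = J a' ∧ X b' = J b' ∧ Y b' = I b') ∨
       (X a' = J a' ∧ Y a' = I a' ∧ X b' = I b' ∧ Y b' = J b')) := by
    rcases lt_or_gt_of_ne hab0 with h | h
    · exact key k a0 b0 (by omega) h s3 t3 (Or.inr ⟨s1, s2, t1, t2⟩)
    · exact key k b0 a0 (by omega) h t3 s3 (Or.inl ⟨t1, t2, s1, s2⟩)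
  obtain ⟨a, b, hab, hgap, hna, hnb, hpat⟩ := main
  intro hNCXY
  have hXY := hNCXY a b hab (by
    intro l h1 h2
    rcases D l with ⟨f1, f2⟩ | ⟨f1, f2⟩
    · rw [f1, f2]; exact hgap l h1 h2
    · rw [f1, f2]; exact (hgap l h1 h2).symm)
  have hIJ := hNC a b hab hgap
  have m1 : I a < I b := hI.1 hab
  have m2 : J a < J b := hJ.1 hab
  have m3 : X a < X b := hX.1 hab
  have m4 : Y a < Y b := hY.1 hab
  unfold Cross at hXY hIJ
  rcases hpat with ⟨p1, p2, p3, p4⟩ | ⟨p1, p2, p3, p4⟩ <;> omega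
end

section
/- Let 0 < k < n and let I, J ∈ V_{k,n}, viewed as k-element subsets of [n]. If I and J are weakly separated, then I and J are noncrossing. -/
/-- `I` and `J` (viewed as `k`-subsets of `[n]`) are weakly separated: there do not
exist `a < b < c < d` with `a, c ∈ I \ J` and `b, d ∈ J \ I`, or vice versa. -/
def WeaklySeparated {k : ℕ} (I J : Fin k → ℕ) : Prop :=
  ¬ ∃ a b c d : ℕ, a < b ∧ b < c ∧ c < d ∧
    (((MemT I a ∧ ¬ MemT J a) ∧ (MemT I c ∧ ¬ MemT J c) ∧
      (MemT J b ∧ ¬ MemT I b) ∧ (MemT J d ∧ ¬ MemT I d)) ∨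
     ((MemT J a ∧ ¬ MemT I a) ∧ (MemT J c ∧ ¬ MemT I c) ∧
      (MemT I b ∧ ¬ MemT J b) ∧ (MemT I d ∧ ¬ MemT J d)))

lemma ws_symm {k : ℕ} {I J : Fin k → ℕ} (h : WeaklySeparated I J) :
    WeaklySeparated J I := by
  rintro ⟨a, b, c, d, h1, h2, h3, h4⟩
  exact h ⟨a, b, c, d, h1, h2, h3, h4.symm⟩

/-- Key lemma: if the arcs cross in the configuration `I a < J a < I b < J b`
(with matching interior), we contradict weak separation. -/
lemma key {k : ℕ} {I J : Fin k → ℕ} (hI : StrictMono I) (hJ : StrictMono J)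
    (hWS : WeaklySeparated I J) (a b : Fin k) (hab : a < b)
    (hmid : ∀ l : Fin k, a < l → l < b → I l = J l)
    (h1 : I a < J a) (h2 : J a < I b) (h3 : I b < J b) : False := by
  -- `J a ∉ I`
  have hJa_I : ¬ MemT I (J a) := by
    rintro ⟨m, hm⟩
    rcases lt_trichotomy m a with hma | hma | hma
    · exact absurd hm (by have := hI hma; omega)
    · subst hma; omega
    · rcases lt_or_ge m b with hmb | hmb
      · have := hmid m hma hmb
        have : m = a := hJ.injective (by omega)
        omega
      · have : I b ≤ I m := hI.monotone hmb
        omega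
  -- `I b ∉ J`
  have hIb_J : ¬ MemT J (I b) := by
    rintro ⟨m, hm⟩
    rcases lt_trichotomy m b with hmb | hmb | hmb
    · rcases lt_or_ge a m with hma | hma
      · have := hmid m hma hmb
        have : m = b := hI.injective (by omega)
        omega
      · have : J m ≤ J a := hJ.monotone hma
        omega
    · subst hmb; omega
    · have : J b ≤ J m := hJ.monotone hmb.le
      omega
  -- there is an element of `I \ J` below `J a`
  have hp : ∃ p, MemT I p ∧ ¬ MemT J p ∧ p < J a := by
    by_contra hcon
    push_neg at hcon
    have hsub : (Finset.Iic a).image I ⊆ (Finset.Iio a).image J := by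
      intro x hx
      simp only [Finset.mem_image, Finset.mem_Iic, Finset.mem_Iio] at hx ⊢
      obtain ⟨m, hm, rfl⟩ := hx
      have hxlt : I m < J a := lt_of_le_of_lt (hI.monotone hm) h1
      have hmem : MemT J (I m) := by
        by_contra hc
        have := hcon (I m) ⟨m, rfl⟩ hc; omega
      obtain ⟨c, hc⟩ := hmem
      exact ⟨c, hJ.lt_iff_lt.mp (by omega), hc⟩
    have c1 : ((Finset.Iic a).image I).card = (a : ℕ) + 1 := by
      rw [Finset.card_image_of_injective _ hI.injective, Fin.card_Iic]
    have c2 : ((Finset.Iio a).image J).card ≤ (a : ℕ) := by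
      calc ((Finset.Iio a).image J).card ≤ (Finset.Iio a).card :=
            Finset.card_image_le
        _ = (a : ℕ) := Fin.card_Iio a
    have := Finset.card_le_card hsub
    omega
  -- there is an element of `J \ I` above `I b`
  have hs : ∃ s, MemT J s ∧ ¬ MemT I s ∧ I b < s := by
    by_contra hcon
    push_neg at hcon
    have hsub : (Finset.Ici b).image J ⊆ (Finset.Ioi b).image I := by
      intro x hx
      simp only [Finset.mem_image, Finset.mem_Ici, Finset.mem_Ioi] at hx ⊢
      obtain ⟨m, hm, rfl⟩ := hx
      have hxlt : I b < J m := lt_of_lt_of_le h3 (hJ.monotone hm)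
      have hmem : MemT I (J m) := by
        by_contra hc
        have := hcon (J m) ⟨m, rfl⟩ hc; omega
      obtain ⟨c, hc⟩ := hmem
      exact ⟨c, hI.lt_iff_lt.mp (by omega), hc⟩
    have c1 : ((Finset.Ici b).image J).card = k - (b : ℕ) := by
      rw [Finset.card_image_of_injective _ hJ.injective, Fin.card_Ici]
    have c2 : ((Finset.Ioi b).image I).card ≤ k - 1 - (b : ℕ) := by
      calc ((Finset.Ioi b).image I).card ≤ (Finset.Ioi b).card :=
            Finset.card_image_le
        _ = k - 1 - (b : ℕ) := Fin.card_Ioi b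
    have := Finset.card_le_card hsub
    have hbk : (b : ℕ) < k := b.isLt
    omega
  obtain ⟨p, hpI, hpJ, hpa⟩ := hp
  obtain ⟨s, hsJ, hsI, hsb⟩ := hs
  exact hWS ⟨p, J a, I b, s, hpa, h2, hsb,
    Or.inl ⟨⟨hpI, hpJ⟩, ⟨⟨b, rfl⟩, hIb_J⟩, ⟨⟨a, rfl⟩, hJa_I⟩, ⟨hsJ, hsI⟩⟩⟩

/-- weakly separated elements of `V_{k,n}` are noncrossing. -/
theorem stmt17 {n k : ℕ} (hk : 0 < k) (hkn : k < n)
    (I J : Fin k → ℕ) (hI : IsVkn n I) (hJ : IsVkn n J)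
    (hWS : WeaklySeparated I J) :
    NonCrossing I J := by
  intro a b hab hmid hcross
  rcases hcross with ⟨h1, h2, h3⟩ | ⟨h1, h2, h3⟩
  · exact key hI.1 hJ.1 hWS a b hab hmid h1 h2 h3
  · exact key hJ.1 hI.1 (ws_symm hWS) a b hab
      (fun l hl1 hl2 => (hmid l hl1 hl2).symm) h1 h2 h3
end

section
/- Let 0 < k < n and let I, J ∈ V_{k,n}. For i ∈ ℤ, denote by I^{+i} ∈ V_{k,n} the cyclic shift of I by i, namely the increasing enumeration of {((x+i−1) mod n) + 1 : x ∈ I}. If I^{+i} and J^{+i} are noncrossing for every i ∈ {0,1,…,n−1}, then I and J are weakly separated. (Together with the converse implication this shows that the weak separation relation is the intersection of all cyclic shifts of the noncrossing relation.) -/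
open Finset
open scoped Classical

section TupleCount

variable {k : ℕ}

/-- number of indices with value ≤ t -/
noncomputable def tcnt (f : Fin k → ℕ) (t : ℕ) : ℕ :=
  (Finset.univ.filter (fun a => f a ≤ t)).card

lemma downclosed_mem_iff (A : Finset (Fin k))
    (h : ∀ a b : Fin k, a ≤ b → b ∈ A → a ∈ A) (p : Fin k) : p ∈ A ↔ (p : ℕ) < A.card := by
  constructor
  · intro hp
    have hsub : Finset.Iic p ⊆ A := fun b hb => h b p (Finset.mem_Iic.mp hb) hp
    have := Finset.card_le_card hsub
    rw [Fin.card_Iic] at this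
    omega
  · intro hp
    by_contra hpA
    have hsub : A ⊆ Finset.Iio p := by
      intro b hb
      rw [Finset.mem_Iio]
      by_contra hbp
      exact hpA (h p b (not_lt.mp hbp) hb)
    have := Finset.card_le_card hsub
    rw [Fin.card_Iio] at this
    omega

lemma lt_tcnt_iff {f : Fin k → ℕ} (hf : StrictMono f) (p : Fin k) (t : ℕ) :
    f p ≤ t ↔ (p : ℕ) < tcnt f t := by
  have h := downclosed_mem_iff (Finset.univ.filter (fun a => f a ≤ t))
    (fun a b hab hb => by
      simp only [Finset.mem_filter, Finset.mem_univ, true_and] at hb ⊢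
      exact le_trans (hf.monotone hab) hb) p
  simpa [tcnt] using h

lemma tcnt_succ {f : Fin k → ℕ} (hf : Function.Injective f) (t : ℕ) (ht : 1 ≤ t) :
    tcnt f t = tcnt f (t - 1) + (if MemT f t then 1 else 0) := by
  have hsplit : (Finset.univ.filter (fun a => f a ≤ t)) =
      (Finset.univ.filter (fun a => f a ≤ t - 1)) ∪ (Finset.univ.filter (fun a => f a = t)) := by
    ext a; simp only [Finset.mem_filter, Finset.mem_union, Finset.mem_univ, true_and]; omega
  have hdisj : Disjoint (Finset.univ.filter (fun a => f a ≤ t - 1))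
      (Finset.univ.filter (fun a => f a = t)) := by
    rw [Finset.disjoint_filter]
    intro a _ ha hb; omega
  have hcard : (Finset.univ.filter (fun a => f a = t)).card = if MemT f t then 1 else 0 := by
    split_ifs with hm
    · obtain ⟨a0, ha0⟩ := hm
      have he : (Finset.univ.filter (fun a => f a = t)) = {a0} := by
        ext b; simp only [Finset.mem_filter, Finset.mem_univ, true_and, Finset.mem_singleton]
        constructor
        · intro hb; exact hf (hb.trans ha0.symm)
        · rintro rfl; exact ha0
      simp [he]
    · rw [Finset.card_eq_zero]
      ext b; simp only [Finset.mem_filter, Finset.mem_univ, true_and, Finset.notMem_empty,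
        iff_false]
      intro hb; exact hm ⟨b, hb⟩
  rw [tcnt, hsplit, Finset.card_union_of_disjoint hdisj, hcard]; rfl

lemma tcnt_mono (f : Fin k → ℕ) {t t' : ℕ} (h : t ≤ t') : tcnt f t ≤ tcnt f t' := by
  apply Finset.card_le_card
  intro a ha
  simp only [Finset.mem_filter, Finset.mem_univ, true_and] at ha ⊢
  omega

lemma tcnt_le (f : Fin k → ℕ) (t : ℕ) : tcnt f t ≤ k := by
  have := Finset.card_filter_le Finset.univ (fun a => f a ≤ t)
  simpa [tcnt] using this

lemma bridge (X Y : Fin k → ℕ) (hX : StrictMono X) (hY : StrictMono Y)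
    (u v : ℕ) (hu : 1 ≤ u) (huv : u ≤ v)
    (hYu : MemT Y u) (hXu : ¬ MemT X u)
    (hXv : MemT X (v + 1)) (hYv : ¬ MemT Y (v + 1))
    (hmid : ∀ t, u < t → t ≤ v → (MemT X t ↔ MemT Y t))
    (hcnt : tcnt X u = tcnt Y u) : ¬ NonCrossing X Y := by
  intro NC
  have hc1 : 1 ≤ tcnt Y u := by
    obtain ⟨pa, hpa⟩ := hYu
    have h1 : Y pa ≤ u := le_of_eq hpa
    rw [lt_tcnt_iff hY] at h1
    omega
  -- counts agree on [u, v]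
  have cnt_mid : ∀ t, u ≤ t → t ≤ v → tcnt X t = tcnt Y t := by
    intro t h1 h2
    induction t with
    | zero => omega
    | succ s ih =>
      rcases Nat.lt_or_ge u (s+1) with hus | hus
      · have hs1 : u ≤ s := by omega
        have hmm := hmid (s+1) (by omega) h2
        have e1 := tcnt_succ hX.injective (s+1) (by omega)
        have e2 := tcnt_succ hY.injective (s+1) (by omega)
        simp only [Nat.add_sub_cancel] at e1 e2
        rw [e1, e2, ih hs1 (by omega)]
        congr 1
        by_cases h3 : MemT X (s+1)
        · rw [if_pos h3, if_pos (hmm.mp h3)]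
        · rw [if_neg h3, if_neg (fun h4 => h3 (hmm.mpr h4))]
      · have he : u = s + 1 := by omega
        rw [← he]; exact hcnt
  have hcv : tcnt X v = tcnt Y v := cnt_mid v huv le_rfl
  have hcc' : tcnt Y u ≤ tcnt X v := by
    have := tcnt_mono Y huv; omega
  have hXv1 : tcnt X (v + 1) = tcnt X v + 1 := by
    have e := tcnt_succ hX.injective (v+1) (by omega)
    simp only [Nat.add_sub_cancel] at e
    rw [e, if_pos hXv]
  have hc'k : tcnt X v < k := by
    have := tcnt_le X (v+1); omega
  have hYu1 : tcnt Y (u - 1) + 1 = tcnt Y u := by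
    have e := tcnt_succ hY.injective u hu
    rw [if_pos hYu] at e
    omega
  have hck : tcnt Y u - 1 < k := by
    have := tcnt_le Y u; omega
  refine absurd (NC ⟨tcnt Y u - 1, hck⟩ ⟨tcnt X v, hc'k⟩ ?_ ?_) (not_not.mpr ?_)
  · rw [Fin.lt_def]; simp only []; omega
  · -- middle agreement
    intro l h1 h2
    rw [Fin.lt_def] at h1 h2
    simp only [] at h1 h2
    have hlc : tcnt Y u ≤ (l : ℕ) := by omega
    have hlc' : (l : ℕ) < tcnt X v := h2
    have hYlv : Y l ≤ v := by rw [lt_tcnt_iff hY]; omega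
    have hYlu : ¬ Y l ≤ u := by rw [lt_tcnt_iff hY]; omega
    have hXlv : X l ≤ v := by rw [lt_tcnt_iff hX]; omega
    have hXlu : ¬ X l ≤ u := by rw [lt_tcnt_iff hX]; omega
    have hle1 : X l ≤ Y l := by
      have hmem : MemT X (Y l) := (hmid (Y l) (by omega) hYlv).mpr ⟨l, rfl⟩
      have g1 : (l : ℕ) < tcnt Y (Y l) := by rw [← lt_tcnt_iff hY]
      have g2 : (l : ℕ) < tcnt X (Y l) := by
        rw [cnt_mid (Y l) (by omega) hYlv]; exact g1
      rw [lt_tcnt_iff hX]; exact g2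
    have hle2 : Y l ≤ X l := by
      have g1 : (l : ℕ) < tcnt X (X l) := by rw [← lt_tcnt_iff hX]
      have g2 : (l : ℕ) < tcnt Y (X l) := by
        rw [← cnt_mid (X l) (by omega) hXlv]; exact g1
      rw [lt_tcnt_iff hY]; exact g2
    omega
  · -- the crossing
    have hYp : Y ⟨tcnt Y u - 1, hck⟩ = u := by
      have h1 : Y ⟨tcnt Y u - 1, hck⟩ ≤ u := by rw [lt_tcnt_iff hY]; simp only []; omega
      have h2 : ¬ Y ⟨tcnt Y u - 1, hck⟩ ≤ u - 1 := by
        rw [lt_tcnt_iff hY]; simp only []; omega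
      omega
    have hXp : X ⟨tcnt Y u - 1, hck⟩ < u := by
      have h1 : X ⟨tcnt Y u - 1, hck⟩ ≤ u := by
        rw [lt_tcnt_iff hX, hcnt]; simp only []; omega
      have h2 : X ⟨tcnt Y u - 1, hck⟩ ≠ u := fun he => hXu ⟨_, he⟩
      omega
    have hXq : X ⟨tcnt X v, hc'k⟩ = v + 1 := by
      have h1 : X ⟨tcnt X v, hc'k⟩ ≤ v + 1 := by
        rw [lt_tcnt_iff hX, hXv1]; simp only []; omega
      have h2 : ¬ X ⟨tcnt X v, hc'k⟩ ≤ v := by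
        rw [lt_tcnt_iff hX]; simp only []; omega
      omega
    have hYq : v + 1 < Y ⟨tcnt X v, hc'k⟩ := by
      have e := tcnt_succ hY.injective (v+1) (by omega)
      rw [if_neg hYv] at e
      simp only [Nat.add_sub_cancel, add_zero] at e
      have h2 : ¬ Y ⟨tcnt X v, hc'k⟩ ≤ v + 1 := by
        rw [lt_tcnt_iff hY, e, ← hcv]; simp only []; omega
      omega
    exact Or.inl ⟨by omega, by omega, by omega⟩

end TupleCount

section Circle

/-- representative of `t` in `[1, n]` -/
def rho (n t : ℕ) : ℕ := (t - 1) % n + 1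

/-- shift amount for a cut after position θ -/
def ii (n θ : ℕ) : ℕ := (n - θ % n) % n

/-- new position of `x` after the cut -/
def tau (n θ x : ℕ) : ℕ := (x + ii n θ - 1) % n + 1

/-- count of circle positions `s ∈ [1, t]` whose value lies in S -/
noncomputable def gcnt (n : ℕ) (S : Finset ℕ) (t : ℕ) : ℕ :=
  ((Finset.Icc 1 t).filter (fun s => rho n s ∈ S)).card

variable {n : ℕ}

lemma rho_bounds (hn : 0 < n) (t : ℕ) : 1 ≤ rho n t ∧ rho n t ≤ n := by
  unfold rho
  have := Nat.mod_lt (t - 1) hn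
  omega

lemma rho_id {t : ℕ} (ht1 : 1 ≤ t) (ht2 : t ≤ n) : rho n t = t := by
  unfold rho
  have : (t - 1) % n = t - 1 := Nat.mod_eq_of_lt (by omega)
  omega

lemma rho_period {t : ℕ} (ht : 1 ≤ t) : rho n (t + n) = rho n t := by
  unfold rho
  have : t + n - 1 = (t - 1) + n := by omega
  rw [this, Nat.add_mod_right]

lemma rho_modeq (t : ℕ) (ht : 1 ≤ t) : rho n t ≡ t [MOD n] := by
  unfold rho
  have h1 : (t - 1) % n ≡ t - 1 [MOD n] := Nat.mod_modEq _ _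
  have h2 := h1.add_right 1
  have : t - 1 + 1 = t := by omega
  rwa [this] at h2

lemma theta_ii_modeq (hn : 0 < n) (θ : ℕ) : θ + ii n θ ≡ 0 [MOD n] := by
  unfold ii
  rcases Nat.eq_zero_or_pos (θ % n) with h0 | hpos
  · have hd : n ∣ θ := Nat.dvd_of_mod_eq_zero h0
    rw [h0]
    simp only [Nat.sub_zero, Nat.mod_self, Nat.add_zero]
    exact (Nat.modEq_zero_iff_dvd).mpr hd
  · have hlt : θ % n < n := Nat.mod_lt _ hn
    have hii : (n - θ % n) % n = n - θ % n := Nat.mod_eq_of_lt (by omega)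
    rw [hii]
    have h1 : θ ≡ θ % n [MOD n] := (Nat.mod_modEq _ _).symm
    have h2 := h1.add_right (n - θ % n)
    have h3 : θ % n + (n - θ % n) = n := by omega
    rw [h3] at h2
    exact h2.trans ((Nat.modEq_zero_iff_dvd).mpr dvd_rfl)

lemma eq_of_modeq_of_bounds {x y : ℕ} (hx1 : 1 ≤ x) (hx2 : x ≤ n) (hy1 : 1 ≤ y) (hy2 : y ≤ n)
    (h : x ≡ y [MOD n]) : x = y := by
  rcases le_total x y with hle | hle
  · have hd := (Nat.modEq_iff_dvd' hle).mp h
    rcases Nat.eq_zero_or_pos (y - x) with h0 | hpos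
    · omega
    · have := Nat.le_of_dvd hpos hd; omega
  · have hd := (Nat.modEq_iff_dvd' hle).mp h.symm
    rcases Nat.eq_zero_or_pos (x - y) with h0 | hpos
    · omega
    · have := Nat.le_of_dvd hpos hd; omega

lemma tau_modeq (θ x : ℕ) (hx : 1 ≤ x) : tau n θ x ≡ x + ii n θ [MOD n] := by
  have : tau n θ x = rho n (x + ii n θ) := by
    unfold tau rho; rfl
  rw [this]
  exact rho_modeq _ (by omega)

lemma tau_bounds (hn : 0 < n) (θ x : ℕ) : 1 ≤ tau n θ x ∧ tau n θ x ≤ n := by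
  unfold tau
  have := Nat.mod_lt (x + ii n θ - 1) hn
  omega

lemma tau_rho (hn : 0 < n) {θ s : ℕ} (h1 : θ < s) (h2 : s ≤ θ + n) :
    tau n θ (rho n s) = s - θ := by
  have hb1 := rho_bounds hn s
  have hb2 := tau_bounds hn θ (rho n s)
  apply eq_of_modeq_of_bounds hb2.1 hb2.2 (by omega) (by omega)
  calc tau n θ (rho n s) ≡ rho n s + ii n θ [MOD n] := tau_modeq θ _ hb1.1
    _ ≡ s + ii n θ [MOD n] := (rho_modeq s (by omega)).add_right _
    _ = (s - θ) + (θ + ii n θ) := by omega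
    _ ≡ (s - θ) + 0 [MOD n] := (theta_ii_modeq hn θ).add_left _
    _ = s - θ := by omega

lemma rho_tau (hn : 0 < n) {θ x : ℕ} (hx1 : 1 ≤ x) (hx2 : x ≤ n) :
    rho n (θ + tau n θ x) = x := by
  have hb2 := tau_bounds hn θ x
  have hb1 := rho_bounds hn (θ + tau n θ x)
  apply eq_of_modeq_of_bounds hb1.1 hb1.2 hx1 hx2
  calc rho n (θ + tau n θ x) ≡ θ + tau n θ x [MOD n] := rho_modeq _ (by omega)
    _ ≡ θ + (x + ii n θ) [MOD n] := (tau_modeq θ x hx1).add_left θ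
    _ = x + (θ + ii n θ) := by omega
    _ ≡ x + 0 [MOD n] := (theta_ii_modeq hn θ).add_left _
    _ = x := by omega

lemma tau_injOn (hn : 0 < n) (θ : ℕ) {S : Finset ℕ} (hS : S ⊆ Finset.Icc 1 n) :
    Set.InjOn (tau n θ) S := by
  intro x hx y hy hxy
  have hxb := Finset.mem_Icc.mp (hS hx)
  have hyb := Finset.mem_Icc.mp (hS hy)
  have := rho_tau hn (θ := θ) hxb.1 hxb.2
  have := rho_tau hn (θ := θ) hyb.1 hyb.2
  rw [← rho_tau hn (θ := θ) hxb.1 hxb.2, ← rho_tau hn (θ := θ) hyb.1 hyb.2, hxy]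

lemma mem_shift (hn : 0 < n) (θ : ℕ) {S : Finset ℕ} (hS : S ⊆ Finset.Icc 1 n)
    {s : ℕ} (h1 : θ < s) (h2 : s ≤ θ + n) :
    (s - θ) ∈ S.image (tau n θ) ↔ rho n s ∈ S := by
  constructor
  · rintro hmem
    obtain ⟨x, hx, hxe⟩ := Finset.mem_image.mp hmem
    have hxb := Finset.mem_Icc.mp (hS hx)
    have : θ + tau n θ x = s := by omega
    rw [← rho_tau hn (θ := θ) hxb.1 hxb.2, this] at hx
    exact hx
  · intro hmem
    apply Finset.mem_image.mpr
    exact ⟨rho n s, hmem, tau_rho hn h1 h2⟩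

lemma gcnt_zero (S : Finset ℕ) : gcnt n S 0 = 0 := by simp [gcnt]

lemma gcnt_succ (S : Finset ℕ) (t : ℕ) :
    gcnt n S (t + 1) = gcnt n S t + (if rho n (t + 1) ∈ S then 1 else 0) := by
  unfold gcnt
  have h : Finset.Icc 1 (t + 1) = insert (t + 1) (Finset.Icc 1 t) := by
    ext a; simp only [Finset.mem_Icc, Finset.mem_insert]; omega
  rw [h, Finset.filter_insert]
  split_ifs with hm
  · rw [Finset.card_insert_of_notMem (by simp [Finset.mem_filter])]
  · rfl

lemma gcnt_mono (S : Finset ℕ) {t t' : ℕ} (h : t ≤ t') : gcnt n S t ≤ gcnt n S t' := by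
  apply Finset.card_le_card
  apply Finset.filter_subset_filter
  intro a ha
  simp only [Finset.mem_Icc] at ha ⊢
  omega

lemma gcnt_total (hn : 0 < n) {S : Finset ℕ} (hS : S ⊆ Finset.Icc 1 n) :
    gcnt n S n = S.card := by
  unfold gcnt
  congr 1
  ext s
  simp only [Finset.mem_filter, Finset.mem_Icc]
  constructor
  · rintro ⟨⟨h1, h2⟩, hm⟩
    rwa [rho_id h1 h2] at hm
  · intro hs
    have hb := Finset.mem_Icc.mp (hS hs)
    exact ⟨⟨hb.1, hb.2⟩, by rwa [rho_id hb.1 hb.2]⟩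

lemma gcnt_period (hn : 0 < n) {S : Finset ℕ} (hS : S ⊆ Finset.Icc 1 n) (t : ℕ) :
    gcnt n S (t + n) = gcnt n S t + S.card := by
  induction t with
  | zero => simpa [gcnt_zero] using gcnt_total hn hS
  | succ s ih =>
    have h1 : s + 1 + n = (s + n) + 1 := by omega
    rw [h1, gcnt_succ, ih, gcnt_succ]
    have h2 : rho n (s + n + 1) = rho n (s + 1) := by
      have : s + n + 1 = (s + 1) + n := by omega
      rw [this, rho_period (by omega)]
    rw [h2]; omega

/-- transfer of counts through the cut -/
lemma cnt_transfer (hn : 0 < n) {θ : ℕ} (hθ : 1 ≤ θ) {S : Finset ℕ} (hS : S ⊆ Finset.Icc 1 n)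
    {m : ℕ} (h1 : θ ≤ m) (h2 : m ≤ θ + n) :
    ((S.image (tau n θ)).filter (fun x => x ≤ m - θ)).card + gcnt n S θ = gcnt n S m := by
  have hsplit : gcnt n S m = gcnt n S θ + ((Finset.Ioc θ m).filter (fun s => rho n s ∈ S)).card := by
    unfold gcnt
    have hu : Finset.Icc 1 m = Finset.Icc 1 θ ∪ Finset.Ioc θ m := by
      ext a; simp only [Finset.mem_Icc, Finset.mem_union, Finset.mem_Ioc]; omega
    rw [hu, Finset.filter_union, Finset.card_union_of_disjoint]
    · simp only [Finset.disjoint_left, Finset.mem_filter, Finset.mem_Icc, Finset.mem_Ioc]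
      intro a ha hb
      omega
  have hbij : ((Finset.Ioc θ m).filter (fun s => rho n s ∈ S)).card
      = ((S.image (tau n θ)).filter (fun x => x ≤ m - θ)).card := by
    apply Finset.card_bij (fun s _ => s - θ)
    · intro s hs
      simp only [Finset.mem_filter, Finset.mem_Ioc] at hs
      simp only [Finset.mem_filter]
      refine ⟨(mem_shift hn θ hS hs.1.1 (by omega)).mpr hs.2, by omega⟩
    · intro s1 hs1 s2 hs2 he
      simp only [Finset.mem_filter, Finset.mem_Ioc] at hs1 hs2
      omega
    · intro y hy
      simp only [Finset.mem_filter] at hy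
      obtain ⟨x, hx, hxe⟩ := Finset.mem_image.mp hy.1
      have hxb := Finset.mem_Icc.mp (hS hx)
      have htb := tau_bounds hn θ x
      refine ⟨θ + y, ?_, by omega⟩
      simp only [Finset.mem_filter, Finset.mem_Ioc]
      have hrho : rho n (θ + y) = x := by
        rw [← hxe]; exact rho_tau hn hxb.1 hxb.2
      exact ⟨⟨by omega, by omega⟩, by rw [hrho]; exact hx⟩
  omega

end Circle

section Walk

lemma ivt (g : ℕ → ℤ) (hstep : ∀ t, g (t + 1) ≤ g t + 1)
    (p q : ℕ) (hpq : p ≤ q) (lam : ℤ) (hp : g p ≤ lam) (hq : lam < g q) :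
    ∃ θ, p ≤ θ ∧ θ < q ∧ g θ = lam := by
  have hne : ((Finset.Icc p q).filter (fun t => g t ≤ lam)).Nonempty :=
    ⟨p, by simp only [Finset.mem_filter, Finset.mem_Icc]; exact ⟨⟨le_rfl, hpq⟩, hp⟩⟩
  set θ := ((Finset.Icc p q).filter (fun t => g t ≤ lam)).max' hne with hθdef
  have hθmem := ((Finset.Icc p q).filter (fun t => g t ≤ lam)).max'_mem hne
  rw [← hθdef] at hθmem
  simp only [Finset.mem_filter, Finset.mem_Icc] at hθmem
  have hθq : θ ≠ q := by
    intro he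
    rw [he] at hθmem
    omega
  have hθlt : θ < q := lt_of_le_of_ne hθmem.1.2 hθq
  have hs1 : lam < g (θ + 1) := by
    by_contra hcon
    push_neg at hcon
    have hmem : θ + 1 ∈ (Finset.Icc p q).filter (fun t => g t ≤ lam) := by
      simp only [Finset.mem_filter, Finset.mem_Icc]
      exact ⟨⟨by omega, by omega⟩, hcon⟩
    have := Finset.le_max' _ _ hmem
    omega
  have := hstep θ
  refine ⟨θ, hθmem.1.1, hθlt, by omega⟩

lemma stretch (g : ℕ → ℤ) (hstep : ∀ t, g (t + 1) ≤ g t + 1 ∧ g t - 1 ≤ g (t + 1))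
    (p q : ℕ) (hpq : p ≤ q) (h1p : 1 ≤ p)
    (hp : g p = g (p - 1) - 1) (hq : g (q + 1) = g q + 1) :
    ∃ u v : ℕ, p ≤ u ∧ u ≤ v ∧ v ≤ q ∧ (g u = g (u - 1) - 1) ∧ (g (v + 1) = g v + 1) ∧
      (∀ t, u ≤ t → t ≤ v → g t = g u) ∧ (∀ t, p ≤ t → t ≤ q → g u ≤ g t) := by
  have hIne : ((Finset.Icc p q).image g).Nonempty := ⟨g p, Finset.mem_image_of_mem g (by
    simp only [Finset.mem_Icc]; omega)⟩
  set lam := ((Finset.Icc p q).image g).min' hIne with hlam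
  have hlam_le : ∀ t, p ≤ t → t ≤ q → lam ≤ g t := by
    intro t h1 h2
    exact Finset.min'_le _ _ (Finset.mem_image_of_mem g (by simp only [Finset.mem_Icc]; omega))
  have hBne : ((Finset.Icc p q).filter (fun t => g t = lam)).Nonempty := by
    obtain ⟨t0, ht0, hge⟩ := Finset.mem_image.mp (((Finset.Icc p q).image g).min'_mem hIne)
    exact ⟨t0, by simp only [Finset.mem_filter]; exact ⟨ht0, hge⟩⟩
  set u := ((Finset.Icc p q).filter (fun t => g t = lam)).min' hBne with hudef
  have humem := ((Finset.Icc p q).filter (fun t => g t = lam)).min'_mem hBne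
  rw [← hudef] at humem
  simp only [Finset.mem_filter, Finset.mem_Icc] at humem
  obtain ⟨⟨hpu, huq⟩, hgu⟩ := humem
  -- v : end of the constant stretch
  have hCne : ((Finset.Icc u q).filter (fun t => ∀ s ∈ Finset.Icc u t, g s = lam)).Nonempty := by
    refine ⟨u, ?_⟩
    simp only [Finset.mem_filter, Finset.mem_Icc]
    refine ⟨⟨le_rfl, huq⟩, fun s hs => ?_⟩
    have : s = u := by omega
    rw [this]; exact hgu
  set v := ((Finset.Icc u q).filter (fun t => ∀ s ∈ Finset.Icc u t, g s = lam)).max' hCne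
    with hvdef
  have hvmem := ((Finset.Icc u q).filter (fun t => ∀ s ∈ Finset.Icc u t, g s = lam)).max'_mem hCne
  rw [← hvdef] at hvmem
  simp only [Finset.mem_filter, Finset.mem_Icc] at hvmem
  obtain ⟨⟨huv, hvq⟩, hconst⟩ := hvmem
  have hconst' : ∀ t, u ≤ t → t ≤ v → g t = g u := by
    intro t h1 h2
    rw [hgu]
    exact hconst t ⟨h1, h2⟩
  -- down-step at u
  have hdown : g u = g (u - 1) - 1 := by
    rcases Nat.eq_or_lt_of_le hpu with he | hlt
    · rw [← he]; exact hp
    · have h1 : lam ≤ g (u - 1) := hlam_le (u - 1) (by omega) (by omega)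
      have h2 : g (u - 1) ≠ lam := by
        intro he
        have hmem : u - 1 ∈ (Finset.Icc p q).filter (fun t => g t = lam) := by
          simp only [Finset.mem_filter, Finset.mem_Icc]
          exact ⟨⟨by omega, by omega⟩, he⟩
        have := Finset.min'_le _ _ hmem
        omega
      have h3 := (hstep (u - 1)).2
      have h4 : u - 1 + 1 = u := by omega
      rw [h4] at h3
      omega
  -- up-step at v + 1
  have hup : g (v + 1) = g v + 1 := by
    rcases Nat.eq_or_lt_of_le hvq with he | hlt
    · rw [he]; exact hq
    · have h1 : lam ≤ g (v + 1) := hlam_le (v + 1) (by omega) (by omega)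
      have h2 : g (v + 1) ≠ lam := by
        intro he
        have hmem : v + 1 ∈ (Finset.Icc u q).filter (fun t => ∀ s ∈ Finset.Icc u t, g s = lam) := by
          simp only [Finset.mem_filter, Finset.mem_Icc]
          refine ⟨⟨by omega, by omega⟩, fun s hs => ?_⟩
          rcases Nat.lt_or_ge s (v + 1) with hs1 | hs1
          · exact (hconst' s hs.1 (by omega)).trans hgu
          · have : s = v + 1 := by omega
            rw [this]; exact he
        have := Finset.le_max' _ _ hmem
        omega
      have h3 := (hstep v).1
      have h4 : g v = lam := (hconst' v huv le_rfl).trans hgu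
      omega
  refine ⟨u, v, hpu, huv, hvq, hdown, hup, hconst', fun t h1 h2 => ?_⟩
  rw [hgu]
  exact hlam_le t h1 h2

end Walk

section Assembly

/-- the value set of a tuple -/
noncomputable def Sset {k : ℕ} (I : Fin k → ℕ) : Finset ℕ := Finset.univ.image I

/-- the circular walk of the pair (I, J) -/
noncomputable def gwalk (n : ℕ) {k : ℕ} (I J : Fin k → ℕ) : ℕ → ℤ :=
  fun t => (gcnt n (Sset I) t : ℤ) - (gcnt n (Sset J) t : ℤ)

variable {n k : ℕ}

lemma Sset_mem {I : Fin k → ℕ} {x : ℕ} : x ∈ Sset I ↔ MemT I x := by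
  simp [Sset, MemT, Finset.mem_image]

lemma Sset_card {I : Fin k → ℕ} (hI : StrictMono I) : (Sset I).card = k := by
  rw [Sset, Finset.card_image_of_injective _ hI.injective, Finset.card_univ, Fintype.card_fin]

lemma Sset_subset {I : Fin k → ℕ} (hI : IsVkn n I) : Sset I ⊆ Finset.Icc 1 n := by
  intro x hx
  obtain ⟨a, _, rfl⟩ := Finset.mem_image.mp hx
  simp only [Finset.mem_Icc]
  exact hI.2 a

lemma gwalk_succ (I J : Fin k → ℕ) (t : ℕ) :
    gwalk n I J (t + 1) = gwalk n I J t + (if rho n (t + 1) ∈ Sset I then 1 else 0)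
      - (if rho n (t + 1) ∈ Sset J then 1 else 0) := by
  unfold gwalk
  rw [gcnt_succ, gcnt_succ]
  push_cast
  split_ifs <;> ring

lemma gwalk_step (I J : Fin k → ℕ) (t : ℕ) :
    gwalk n I J (t + 1) ≤ gwalk n I J t + 1 ∧ gwalk n I J t - 1 ≤ gwalk n I J (t + 1) := by
  have e := gwalk_succ I J (n := n) t
  split_ifs at e <;> omega

lemma gwalk_down_iff (I J : Fin k → ℕ) {t : ℕ} (ht : 1 ≤ t) :
    gwalk n I J t = gwalk n I J (t - 1) - 1 ↔ (rho n t ∈ Sset J ∧ rho n t ∉ Sset I) := by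
  have e := gwalk_succ I J (n := n) (t - 1)
  rw [show t - 1 + 1 = t by omega] at e
  constructor
  · intro hd
    split_ifs at e with h1 h2
    · omega
    · omega
    · exact ⟨‹_›, h1⟩
    · omega
  · rintro ⟨hJ, hI⟩
    rw [if_neg hI, if_pos hJ] at e
    omega

lemma gwalk_up_iff (I J : Fin k → ℕ) {t : ℕ} (ht : 1 ≤ t) :
    gwalk n I J t = gwalk n I J (t - 1) + 1 ↔ (rho n t ∈ Sset I ∧ rho n t ∉ Sset J) := by
  have e := gwalk_succ I J (n := n) (t - 1)
  rw [show t - 1 + 1 = t by omega] at e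
  constructor
  · intro hd
    split_ifs at e with h1 h2
    · omega
    · exact ⟨h1, h2⟩
    · omega
    · omega
  · rintro ⟨hI, hJ⟩
    rw [if_pos hI, if_neg hJ] at e
    omega

lemma gwalk_zero_iff (I J : Fin k → ℕ) {t : ℕ} (ht : 1 ≤ t) :
    gwalk n I J t = gwalk n I J (t - 1) → (rho n t ∈ Sset I ↔ rho n t ∈ Sset J) := by
  have e := gwalk_succ I J (n := n) (t - 1)
  rw [show t - 1 + 1 = t by omega] at e
  intro hz
  split_ifs at e with h1 h2 <;> first | (exact iff_of_true ‹_› ‹_›) | (exact iff_of_false ‹_› ‹_›) | omega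

lemma gwalk_period (hn : 0 < n) {I J : Fin k → ℕ} (hI : IsVkn n I) (hJ : IsVkn n J) (t : ℕ) :
    gwalk n I J (t + n) = gwalk n I J t := by
  unfold gwalk
  rw [gcnt_period hn (Sset_subset hI), gcnt_period hn (Sset_subset hJ),
    Sset_card hI.1, Sset_card hJ.1]
  push_cast
  ring

/-- build the strictly increasing tuple enumerating a finset -/
lemma tuple_exists (S : Finset ℕ) (hcard : S.card = k) (hsub : S ⊆ Finset.Icc 1 n) :
    ∃ X : Fin k → ℕ, IsVkn n X ∧ (∀ x, MemT X x ↔ x ∈ S) := by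
  refine ⟨fun a => (S.orderIsoOfFin hcard a : ℕ), ⟨?_, ?_⟩, ?_⟩
  · intro a b hab
    exact_mod_cast (S.orderIsoOfFin hcard).strictMono hab
  · intro a
    have := (S.orderIsoOfFin hcard a).2
    have hb := Finset.mem_Icc.mp (hsub this)
    exact hb
  · intro x
    constructor
    · rintro ⟨a, rfl⟩
      exact (S.orderIsoOfFin hcard a).2
    · intro hx
      exact ⟨(S.orderIsoOfFin hcard).symm ⟨x, hx⟩, by simp⟩

lemma tcnt_eq_card {X : Fin k → ℕ} (hX : StrictMono X) {S : Finset ℕ}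
    (himg : ∀ x, MemT X x ↔ x ∈ S) (t : ℕ) :
    tcnt X t = (S.filter (fun x => x ≤ t)).card := by
  apply Finset.card_bij (fun a _ => X a)
  · intro a ha
    simp only [Finset.mem_filter, Finset.mem_univ, true_and] at ha
    simp only [Finset.mem_filter]
    exact ⟨(himg (X a)).mp ⟨a, rfl⟩, ha⟩
  · intro a1 _ a2 _ he
    exact hX.injective he
  · intro x hx
    simp only [Finset.mem_filter] at hx
    obtain ⟨a, ha⟩ := (himg x).mpr hx.1
    refine ⟨a, ?_, ha⟩
    simp only [Finset.mem_filter, Finset.mem_univ, true_and]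
    omega

lemma cutbridge (hk : 0 < k) (hkn : k < n) (I J : Fin k → ℕ)
    (hI : IsVkn n I) (hJ : IsVkn n J)
    (h : ∀ i < n, ∀ I' J' : Fin k → ℕ,
      IsVkn n I' → (∀ x, MemT I' x ↔ ∃ a, (I a + i - 1) % n + 1 = x) →
      IsVkn n J' → (∀ x, MemT J' x ↔ ∃ a, (J a + i - 1) % n + 1 = x) →
      NonCrossing I' J')
    (θ mu mv : ℕ) (hθ1 : 1 ≤ θ) (h1 : θ < mu) (h2 : mu ≤ mv) (h3 : mv + 1 ≤ θ + n)
    (hgθ : gwalk n I J θ = gwalk n I J mu)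
    (hconst : ∀ t, mu ≤ t → t ≤ mv → gwalk n I J t = gwalk n I J mu)
    (hdownJ : rho n mu ∈ Sset J) (hdownI : rho n mu ∉ Sset I)
    (hupI : rho n (mv + 1) ∈ Sset I) (hupJ : rho n (mv + 1) ∉ Sset J) : False := by
  have hn : 0 < n := by omega
  have hsubI := Sset_subset hI
  have hsubJ := Sset_subset hJ
  -- shifted value sets
  have hS'card : ((Sset I).image (tau n θ)).card = k := by
    rw [Finset.card_image_of_injOn (tau_injOn hn θ hsubI), Sset_card hI.1]
  have hT'card : ((Sset J).image (tau n θ)).card = k := by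
    rw [Finset.card_image_of_injOn (tau_injOn hn θ hsubJ), Sset_card hJ.1]
  have hS'sub : (Sset I).image (tau n θ) ⊆ Finset.Icc 1 n := by
    intro x hx
    obtain ⟨y, _, rfl⟩ := Finset.mem_image.mp hx
    have := tau_bounds hn θ y
    simp only [Finset.mem_Icc]
    omega
  have hT'sub : (Sset J).image (tau n θ) ⊆ Finset.Icc 1 n := by
    intro x hx
    obtain ⟨y, _, rfl⟩ := Finset.mem_image.mp hx
    have := tau_bounds hn θ y
    simp only [Finset.mem_Icc]
    omega
  obtain ⟨X, hXvkn, hXmem⟩ := tuple_exists _ hS'card hS'sub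
  obtain ⟨Y, hYvkn, hYmem⟩ := tuple_exists _ hT'card hT'sub
  have hi : ii n θ < n := Nat.mod_lt _ hn
  have hspecI : ∀ x, MemT X x ↔ ∃ a, (I a + ii n θ - 1) % n + 1 = x := by
    intro x
    rw [hXmem]
    simp only [Finset.mem_image, Sset, Finset.mem_image, Finset.mem_univ, true_and]
    constructor
    · rintro ⟨y, ⟨a, rfl⟩, rfl⟩
      exact ⟨a, rfl⟩
    · rintro ⟨a, rfl⟩
      exact ⟨I a, ⟨a, rfl⟩, rfl⟩
  have hspecJ : ∀ x, MemT Y x ↔ ∃ a, (J a + ii n θ - 1) % n + 1 = x := by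
    intro x
    rw [hYmem]
    simp only [Finset.mem_image, Sset, Finset.mem_image, Finset.mem_univ, true_and]
    constructor
    · rintro ⟨y, ⟨a, rfl⟩, rfl⟩
      exact ⟨a, rfl⟩
    · rintro ⟨a, rfl⟩
      exact ⟨J a, ⟨a, rfl⟩, rfl⟩
  have NC := h (ii n θ) hi X Y hXvkn hspecI hYvkn hspecJ
  -- now contradict via the bridge
  have hmu_le : mu ≤ θ + n := by omega
  refine bridge X Y hXvkn.1 hYvkn.1 (mu - θ) (mv - θ) (by omega) (by omega) ?_ ?_ ?_ ?_ ?_ ?_ NC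
  · rw [hYmem]
    exact (mem_shift hn θ hsubJ h1 hmu_le).mpr hdownJ
  · rw [hXmem]
    intro hmem
    exact hdownI ((mem_shift hn θ hsubI h1 hmu_le).mp hmem)
  · rw [hXmem, show mv - θ + 1 = (mv + 1) - θ by omega]
    exact (mem_shift hn θ hsubI (by omega) (by omega)).mpr hupI
  · rw [hYmem, show mv - θ + 1 = (mv + 1) - θ by omega]
    intro hmem
    exact hupJ ((mem_shift hn θ hsubJ (by omega) (by omega)).mp hmem)
  · -- middle agreement
    intro t ht1 ht2
    have hs1 : θ < θ + t := by omega
    have hs2 : θ + t ≤ θ + n := by omega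
    have hzero : gwalk n I J (θ + t) = gwalk n I J (θ + t - 1) := by
      rw [hconst (θ + t) (by omega) (by omega), hconst (θ + t - 1) (by omega) (by omega)]
    have hiff := gwalk_zero_iff I J (n := n) (by omega) hzero
    rw [hXmem, hYmem, show t = (θ + t) - θ by omega]
    rw [mem_shift hn θ hsubI hs1 hs2, mem_shift hn θ hsubJ hs1 hs2]
    exact hiff
  · -- count condition
    rw [tcnt_eq_card hXvkn.1 hXmem, tcnt_eq_card hYvkn.1 hYmem]
    have e1 := cnt_transfer hn hθ1 hsubI (le_of_lt h1) hmu_le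
    have e2 := cnt_transfer hn hθ1 hsubJ (le_of_lt h1) hmu_le
    have m1 : gcnt n (Sset I) θ ≤ gcnt n (Sset I) mu := gcnt_mono _ (by omega)
    have m2 : gcnt n (Sset J) θ ≤ gcnt n (Sset J) mu := gcnt_mono _ (by omega)
    unfold gwalk at hgθ
    omega

lemma mainlem (hk : 0 < k) (hkn : k < n) (I J : Fin k → ℕ)
    (hI : IsVkn n I) (hJ : IsVkn n J)
    (h : ∀ i < n, ∀ I' J' : Fin k → ℕ,
      IsVkn n I' → (∀ x, MemT I' x ↔ ∃ a, (I a + i - 1) % n + 1 = x) →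
      IsVkn n J' → (∀ x, MemT J' x ↔ ∃ a, (J a + i - 1) % n + 1 = x) →
      NonCrossing I' J')
    (a b c d : ℕ) (hab : a < b) (hbc : b < c) (hcd : c < d)
    (haI : a ∈ Sset I) (haJ : a ∉ Sset J) (hcI : c ∈ Sset I) (hcJ : c ∉ Sset J)
    (hbJ : b ∈ Sset J) (hbI : b ∉ Sset I) (hdJ : d ∈ Sset J) (hdI : d ∉ Sset I) : False := by
  have hn : 0 < n := by omega
  have ha1 : 1 ≤ a := by
    have := Finset.mem_Icc.mp (Sset_subset hI haI); omega
  have hdn : d ≤ n := by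
    have := Finset.mem_Icc.mp (Sset_subset hJ hdJ); omega
  have hstep : ∀ t, gwalk n I J (t + 1) ≤ gwalk n I J t + 1 ∧ gwalk n I J t - 1 ≤ gwalk n I J (t + 1) := gwalk_step I J
  -- stretch on [b, c-1]
  have hrb : rho n b = b := rho_id (show 1 ≤ b by omega) (show b ≤ n by omega)
  have hdownb : gwalk n I J b = gwalk n I J (b - 1) - 1 :=
    (gwalk_down_iff (n := n) I J (by omega)).mpr (by rw [hrb]; exact ⟨hbJ, hbI⟩)
  have hupc : gwalk n I J ((c - 1) + 1) = gwalk n I J (c - 1) + 1 := by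
    rw [show c - 1 + 1 = c by omega]
    have hrc : rho n c = c := rho_id (show 1 ≤ c by omega) (show c ≤ n by omega)
    have := (gwalk_up_iff (n := n) I J (t := c) (by omega)).mpr
      (by rw [hrc]; exact ⟨hcI, hcJ⟩)
    rw [this]
  obtain ⟨u1, v1, hpu1, huv1, hvq1, hdown1, hup1, hconst1, hmin1⟩ :=
    stretch (gwalk n I J) hstep b (c - 1) (by omega) (by omega) hdownb hupc
  -- stretch on [d, a+n-1]
  have hrd : rho n d = d := rho_id (show 1 ≤ d by omega) (show d ≤ n by omega)
  have hdownd : gwalk n I J d = gwalk n I J (d - 1) - 1 :=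
    (gwalk_down_iff (n := n) I J (by omega)).mpr (by rw [hrd]; exact ⟨hdJ, hdI⟩)
  have hupa : gwalk n I J ((a + n - 1) + 1) = gwalk n I J (a + n - 1) + 1 := by
    rw [show a + n - 1 + 1 = a + n by omega]
    have hrho : rho n (a + n) = a := by
      rw [rho_period (show 1 ≤ a by omega), rho_id (show 1 ≤ a by omega) (show a ≤ n by omega)]
    have := (gwalk_up_iff (n := n) I J (t := a + n) (by omega)).mpr
      (by rw [hrho]; exact ⟨haI, haJ⟩)
    rw [this, show a + n - 1 = a + n - 1 by rfl]
  obtain ⟨u2, v2, hpu2, huv2, hvq2, hdown2, hup2, hconst2, hmin2⟩ :=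
    stretch (gwalk n I J) hstep d (a + n - 1) (by omega) (by omega) hdownd hupa
  -- membership extraction
  have hmem1d : rho n u1 ∈ Sset J ∧ rho n u1 ∉ Sset I :=
    (gwalk_down_iff (n := n) I J (by omega)).mp hdown1
  have hmem1u : rho n (v1 + 1) ∈ Sset I ∧ rho n (v1 + 1) ∉ Sset J := by
    have := (gwalk_up_iff (n := n) I J (t := v1 + 1) (by omega))
    rw [show v1 + 1 - 1 = v1 by omega] at this
    exact this.mp hup1
  have hmem2d : rho n u2 ∈ Sset J ∧ rho n u2 ∉ Sset I :=
    (gwalk_down_iff (n := n) I J (by omega)).mp hdown2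
  have hmem2u : rho n (v2 + 1) ∈ Sset I ∧ rho n (v2 + 1) ∉ Sset J := by
    have := (gwalk_up_iff (n := n) I J (t := v2 + 1) (by omega))
    rw [show v2 + 1 - 1 = v2 by omega] at this
    exact this.mp hup2
  rcases le_or_gt (gwalk n I J u1) (gwalk n I J u2) with hle | hlt
  · -- cut between u1 and u2 - 1 at level gwalk n I J u2
    have hq2 : gwalk n I J u2 < gwalk n I J (u2 - 1) := by omega
    obtain ⟨θ, hθ1, hθ2, hθ3⟩ := ivt (gwalk n I J) (fun t => (hstep t).1) u1 (u2 - 1)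
      (by omega) (gwalk n I J u2) hle (by omega)
    exact cutbridge hk hkn I J hI hJ h θ u2 v2 (by omega) (by omega) huv2 (by omega)
      (by show gwalk n I J θ = gwalk n I J u2; rw [hθ3]) hconst2 hmem2d.1 hmem2d.2 hmem2u.1 hmem2u.2
  · -- cut between u2 and u1 + n - 1 at level gwalk n I J u1
    have hper : ∀ t, gwalk n I J (t + n) = gwalk n I J t := gwalk_period hn hI hJ
    have hq1 : gwalk n I J (u1 + n - 1) = gwalk n I J u1 + 1 := by
      rw [show u1 + n - 1 = (u1 - 1) + n by omega, hper]
      omega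
    obtain ⟨θ, hθ1, hθ2, hθ3⟩ := ivt (gwalk n I J) (fun t => (hstep t).1) u2 (u1 + n - 1)
      (by omega) (gwalk n I J u1) (le_of_lt hlt) (by omega)
    have hgmu : gwalk n I J (u1 + n) = gwalk n I J u1 := hper u1
    refine cutbridge hk hkn I J hI hJ h θ (u1 + n) (v1 + n) (by omega) (by omega) (by omega)
      (by omega) (by show gwalk n I J θ = gwalk n I J (u1 + n); rw [hθ3, hgmu]) ?_ ?_ ?_ ?_ ?_
    · intro t ht1 ht2
      show gwalk n I J t = gwalk n I J (u1 + n)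
      rw [hgmu, show t = (t - n) + n by omega, hper]
      exact hconst1 (t - n) (by omega) (by omega)
    · rw [rho_period (by omega)]; exact hmem1d.1
    · rw [rho_period (by omega)]; exact hmem1d.2
    · rw [show v1 + n + 1 = (v1 + 1) + n by omega, rho_period (by omega)]; exact hmem1u.1
    · rw [show v1 + n + 1 = (v1 + 1) + n by omega, rho_period (by omega)]; exact hmem1u.2

end Assembly

lemma noncrossing_symm {k : ℕ} {X Y : Fin k → ℕ} (h : NonCrossing X Y) : NonCrossing Y X := by
  intro a b hab hmid hcr
  apply h a b hab (fun l h1 h2 => (hmid l h1 h2).symm)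
  rcases hcr with ⟨h1, h2, h3⟩ | ⟨h1, h2, h3⟩
  · exact Or.inr ⟨h1, h2, h3⟩
  · exact Or.inl ⟨h1, h2, h3⟩

/-- if for every `i ∈ {0,…,n−1}` the cyclic shifts `I^{+i}` and `J^{+i}`
(the increasing enumerations of `{((x+i−1) mod n) + 1 : x ∈ I}` and likewise for `J`)
are noncrossing, then `I` and `J` are weakly separated. -/
theorem stmt18 {n k : ℕ} (hk : 0 < k) (hkn : k < n)
    (I J : Fin k → ℕ) (hI : IsVkn n I) (hJ : IsVkn n J)
    (h : ∀ i < n, ∀ I' J' : Fin k → ℕ,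
      IsVkn n I' → (∀ x, MemT I' x ↔ ∃ a, (I a + i - 1) % n + 1 = x) →
      IsVkn n J' → (∀ x, MemT J' x ↔ ∃ a, (J a + i - 1) % n + 1 = x) →
      NonCrossing I' J') :
    WeaklySeparated I J := by
  rintro ⟨a, b, c, d, h1, h2, h3, hor⟩
  rcases hor with ⟨⟨haI, haJ⟩, ⟨hcI, hcJ⟩, ⟨hbJ, hbI⟩, ⟨hdJ, hdI⟩⟩ |
    ⟨⟨haJ, haI⟩, ⟨hcJ, hcI⟩, ⟨hbI, hbJ⟩, ⟨hdI, hdJ⟩⟩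
  · exact mainlem hk hkn I J hI hJ h a b c d h1 h2 h3 (Sset_mem.mpr haI)
      (fun hx => haJ (Sset_mem.mp hx)) (Sset_mem.mpr hcI) (fun hx => hcJ (Sset_mem.mp hx))
      (Sset_mem.mpr hbJ) (fun hx => hbI (Sset_mem.mp hx)) (Sset_mem.mpr hdJ)
      (fun hx => hdI (Sset_mem.mp hx))
  · refine mainlem hk hkn J I hJ hI ?_ a b c d h1 h2 h3 (Sset_mem.mpr haJ)
      (fun hx => haI (Sset_mem.mp hx)) (Sset_mem.mpr hcJ) (fun hx => hcI (Sset_mem.mp hx))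
      (Sset_mem.mpr hbI) (fun hx => hbJ (Sset_mem.mp hx)) (Sset_mem.mpr hdI)
      (fun hx => hdJ (Sset_mem.mp hx))
    intro i hi I2 J2 hI2 sI2 hJ2 sJ2
    exact noncrossing_symm (h i hi J2 I2 hJ2 sJ2 hI2 sI2)
end
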